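/- arXiv:1812.09098 — 3 statements merged into one kernel-verified Lean document; each statement's English description precedes it below -/
import Mathlib

section
/- For every n ≥ 1, the 'type B binomial-Eulerian polynomial' A*_n(t) = 1 + t ∑_{k=1}^n C(n,k) (1+t)^k A_k(t) is a palindromic and unimodal polynomial in t of degree 2n (with center of symmetry n). -/
open Finset

/-- A permutation of `Fin n` viewed as a function `ℕ → ℕ` (0-based), identity outside. -/
def pf {n : ℕ} (π : Equiv.Perm (Fin n)) (i : ℕ) : ℕ :=
  if h : i < n then (π ⟨i, h⟩ : ℕ) else i

/-- Number of descents. -/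
def desN {n : ℕ} (π : Equiv.Perm (Fin n)) : ℕ :=
  ((range (n - 1)).filter (fun i => pf π (i + 1) < pf π i)).card

/-- Number of inversions. -/
def invN {n : ℕ} (π : Equiv.Perm (Fin n)) : ℕ :=
  (((range n) ×ˢ (range n)).filter (fun p => p.1 < p.2 ∧ pf π p.2 < pf π p.1)).card

/-- Number of excedances. -/
def excN {n : ℕ} (π : Equiv.Perm (Fin n)) : ℕ :=
  ((range n).filter (fun i => i < pf π i)).card

/-- Major index. -/
def majN {n : ℕ} (π : Equiv.Perm (Fin n)) : ℕ :=
  ∑ i ∈ (range (n - 1)).filter (fun i => pf π (i + 1) < pf π i), (i + 1)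

/-- Number of admissible inversions. -/
def aiN {n : ℕ} (π : Equiv.Perm (Fin n)) : ℕ :=
  (((range n) ×ˢ (range n)).filter (fun p => p.1 < p.2 ∧ pf π p.2 < pf π p.1 ∧
    ((0 < p.1 ∧ pf π (p.1 - 1) < pf π p.1) ∨ ∃ k < p.2, p.1 < k ∧ pf π p.1 < pf π k))).card

/-- The classical Eulerian polynomial `A_n(t) = ∑_{π ∈ S_n} t^{des π}`. -/
def eulerPoly (R : Type*) [CommRing R] (n : ℕ) (t : R) : R :=
  ∑ π : Equiv.Perm (Fin n), t ^ desN π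

/-- The (maj, exc) q-Eulerian polynomial `A_n(t,q)`. -/
def Aq (R : Type*) [CommRing R] (n : ℕ) (t q : R) : R :=
  ∑ π : Equiv.Perm (Fin n), t ^ excN π * q ^ (majN π - excN π)

/-- The Gaussian binomial coefficient (as a value at `q`), via the q-Pascal recurrence. -/
def gaussR {R : Type*} [CommRing R] (q : R) : ℕ → ℕ → R
  | _, 0 => 1
  | 0, _ + 1 => 0
  | n + 1, k + 1 => gaussR q n k + q ^ (k + 1) * gaussR q n (k + 1)

/-- The q-binomial-Eulerian polynomial `Ã_n(t,q)`. -/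
def Atilde (R : Type*) [CommRing R] (n : ℕ) (t q : R) : R :=
  1 + t * ∑ m ∈ Icc 1 n, gaussR q n m * Aq R m t q

/-- Membership in PRW: if the permutation has an ascent, then the first ascent
carries the smallest letter. -/
def isPRW {n : ℕ} (π : Equiv.Perm (Fin n)) : Prop :=
  ∀ i < n, i + 1 < n → pf π i < pf π (i + 1) →
    (∀ j < i, ¬ pf π j < pf π (j + 1)) → pf π i = 0

instance {n : ℕ} : DecidablePred (isPRW (n := n)) := fun _ => by
  unfold isPRW; infer_instance

/-- 1-based entries with boundary convention `σ₀ = σ_{n+1} = +∞` (encoded as `n`). -/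
def extv {n : ℕ} (π : Equiv.Perm (Fin n)) (i : ℕ) : ℕ :=
  if 1 ≤ i ∧ i ≤ n then pf π (i - 1) else n

/-- Number of non-initial double descents. -/
def ddN {n : ℕ} (π : Equiv.Perm (Fin n)) : ℕ :=
  ((Icc 2 n).filter (fun i => extv π (i + 1) < extv π i ∧ extv π i < extv π (i - 1))).card

/-- The type B binomial-Eulerian polynomial `A*_n(t) = 1 + t ∑_{k=1}^n C(n,k)(1+t)^k A_k(t)`. -/
def Astar (R : Type*) [CommRing R] (n : ℕ) (t : R) : R :=
  1 + t * ∑ k ∈ Icc 1 n, (n.choose k : R) * (1 + t) ^ k * eulerPoly R k t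

namespace Stmt14

open Polynomial Equiv

variable {k : ℕ}

lemma pf_lt {n : ℕ} (π : Equiv.Perm (Fin n)) {i : ℕ} (h : i < n) : pf π i < n := by
  simp only [pf, dif_pos h]; exact (π ⟨i, h⟩).isLt

lemma pf_of_lt {n : ℕ} (π : Equiv.Perm (Fin n)) {i : ℕ} (h : i < n) :
    pf π i = (π ⟨i, h⟩ : ℕ) := by simp only [pf, dif_pos h]

/-- position shuffle: `p ↦ last`, `i ↦ i-1` for `i > p`, identity below `p`. -/
def mu (p : Fin (k + 1)) : Equiv.Perm (Fin (k + 1)) :=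
  (Fin.revPerm.trans (p.rev.cycleRange)).trans Fin.revPerm

lemma mu_apply (p i : Fin (k + 1)) : mu p i = (p.rev.cycleRange i.rev).rev := rfl

lemma mu_apply_of_lt {p i : Fin (k + 1)} (h : i < p) : mu p i = i := by
  rw [mu_apply, Fin.cycleRange_of_gt (Fin.rev_lt_rev.2 h), Fin.rev_rev]

lemma mu_apply_self (p : Fin (k + 1)) : mu p p = Fin.last k := by
  rw [mu_apply, Fin.cycleRange_self, Fin.rev_zero]

lemma mu_apply_of_gt {p i : Fin (k + 1)} (h : p < i) : ((mu p i : Fin (k + 1)) : ℕ) = (i : ℕ) - 1 := by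
  rw [mu_apply, Fin.cycleRange_of_lt (Fin.rev_lt_rev.2 h)]
  have hi0 : 0 < (i : ℕ) := by
    rcases Nat.eq_zero_or_pos (i : ℕ) with h0 | h0
    · exfalso; have : (p : ℕ) < (i : ℕ) := h; omega
    · exact h0
  have hik : (i : ℕ) ≤ k := Nat.lt_succ_iff.mp i.isLt
  have hrev : (i.rev : ℕ) = k - (i : ℕ) := by
    rw [Fin.val_rev]; omega
  have hlt : i.rev < Fin.last k := by
    rw [Fin.lt_iff_val_lt_val, hrev, Fin.val_last]; omega
  have hadd : ((i.rev + 1 : Fin (k+1)) : ℕ) = (i.rev : ℕ) + 1 := Fin.val_add_one_of_lt hlt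
  rw [Fin.val_rev, hadd, hrev]
  omega

/-- extension of a permutation of `Fin k` to `Fin (k+1)` fixing the last element. -/
def extLast (τ : Equiv.Perm (Fin k)) : Equiv.Perm (Fin (k + 1)) :=
  finSuccEquivLast.symm.permCongr τ.optionCongr

lemma extLast_castSucc (τ : Equiv.Perm (Fin k)) (j : Fin k) :
    extLast τ j.castSucc = (τ j).castSucc := by
  simp [extLast, Equiv.permCongr_apply]

lemma extLast_last (τ : Equiv.Perm (Fin k)) : extLast τ (Fin.last k) = Fin.last k := by
  simp [extLast, Equiv.permCongr_apply]

/-- insertion of the largest letter at position `p`. -/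
def ins (τ : Equiv.Perm (Fin k)) (p : Fin (k + 1)) : Equiv.Perm (Fin (k + 1)) :=
  (mu p).trans (extLast τ)

lemma ins_apply (τ : Equiv.Perm (Fin k)) (p i : Fin (k + 1)) :
    ins τ p i = extLast τ (mu p i) := rfl

lemma pf_ins_lt (τ : Equiv.Perm (Fin k)) (p : Fin (k+1)) {i : ℕ} (hik : i < k)
    (hip : i < (p : ℕ)) : pf (ins τ p) i = pf τ i := by
  have hik1 : i < k + 1 := by omega
  rw [pf_of_lt _ hik1, pf_of_lt _ hik]
  have h1 : (⟨i, hik1⟩ : Fin (k+1)) = (⟨i, hik⟩ : Fin k).castSucc := rfl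
  have h2 : (⟨i, hik1⟩ : Fin (k+1)) < p := hip
  rw [ins_apply, mu_apply_of_lt h2, h1, extLast_castSucc]
  rfl

lemma pf_ins_self (τ : Equiv.Perm (Fin k)) (p : Fin (k+1)) : pf (ins τ p) (p : ℕ) = k := by
  rw [pf_of_lt _ p.isLt]
  have : (⟨(p : ℕ), p.isLt⟩ : Fin (k+1)) = p := rfl
  rw [this, ins_apply, mu_apply_self, extLast_last]
  rfl

lemma pf_ins_gt (τ : Equiv.Perm (Fin k)) (p : Fin (k+1)) {i : ℕ} (hik : i ≤ k)
    (hpi : (p : ℕ) < i) : pf (ins τ p) i = pf τ (i - 1) := by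
  have hik1 : i < k + 1 := by omega
  have hi1k : i - 1 < k := by omega
  rw [pf_of_lt _ hik1, pf_of_lt _ hi1k]
  have h2 : p < (⟨i, hik1⟩ : Fin (k+1)) := hpi
  rw [ins_apply]
  have hval : ((mu p ⟨i, hik1⟩ : Fin (k+1)) : ℕ) = i - 1 := mu_apply_of_gt h2
  have : (mu p ⟨i, hik1⟩ : Fin (k+1)) = (⟨i - 1, hi1k⟩ : Fin k).castSucc := by
    apply Fin.ext; simpa using hval
  rw [this, extLast_castSucc]
  rfl


section counting

variable (τ : Equiv.Perm (Fin k)) (p : Fin (k + 1))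

/-- indicator of a descent of `ins τ p` at position `i` -/
private def fI (τ : Equiv.Perm (Fin k)) (p : Fin (k+1)) (i : ℕ) : ℕ :=
  if pf (ins τ p) (i + 1) < pf (ins τ p) i then 1 else 0

/-- indicator of a descent of `τ` at position `i` -/
private def gI (τ : Equiv.Perm (Fin k)) (i : ℕ) : ℕ :=
  if pf τ (i + 1) < pf τ i then 1 else 0

lemma desN_ins_eq_sum : desN (ins τ p) = ∑ i ∈ range k, fI τ p i := by
  have : k + 1 - 1 = k := by omega
  rw [desN, this, Finset.card_filter]; rfl

lemma desN_eq_sum : desN τ = ∑ i ∈ range (k-1), gI τ i := by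
  rw [desN, Finset.card_filter]; rfl

lemma fI_c1 {i : ℕ} (h : i + 1 < (p : ℕ)) : fI τ p i = gI τ i := by
  have hp : (p : ℕ) ≤ k := Nat.lt_succ_iff.mp p.isLt
  rw [fI, gI, pf_ins_lt τ p (by omega) (by omega), pf_ins_lt τ p (by omega) (by omega)]

lemma fI_c2 (h1 : 1 ≤ (p : ℕ)) : fI τ p ((p : ℕ) - 1) = 0 := by
  have hp : (p : ℕ) ≤ k := Nat.lt_succ_iff.mp p.isLt
  have h2 : (p : ℕ) - 1 + 1 = (p : ℕ) := by omega
  rw [fI, h2, pf_ins_self, pf_ins_lt τ p (by omega) (by omega), if_neg]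
  have := pf_lt τ (show (p:ℕ) - 1 < k by omega)
  omega

lemma fI_c3 (h : (p : ℕ) < k) : fI τ p (p : ℕ) = 1 := by
  rw [fI, pf_ins_self, pf_ins_gt τ p (by omega) (by omega), if_pos]
  have h2 : (p : ℕ) + 1 - 1 = (p : ℕ) := by omega
  rw [h2]
  exact pf_lt τ h

lemma fI_c4 {i : ℕ} (h1 : (p : ℕ) ≤ i) (h2 : i + 1 < k) : fI τ p (i + 1) = gI τ i := by
  rw [fI, gI, pf_ins_gt τ p (by omega) (by omega), pf_ins_gt τ p (by omega) (by omega)]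
  have e1 : i + 1 + 1 - 1 = i + 1 := by omega
  have e2 : i + 1 - 1 = i := by omega
  rw [e1, e2]

/-- The key counting lemma, in addition form. -/
lemma desN_ins_count :
    desN (ins τ p) + (if 1 ≤ (p : ℕ) ∧ (p : ℕ) < k ∧ gI τ ((p : ℕ) - 1) = 1 then 1 else 0)
      = desN τ + (if (p : ℕ) < k then 1 else 0) := by
  have hp : (p : ℕ) ≤ k := Nat.lt_succ_iff.mp p.isLt
  rw [desN_ins_eq_sum, desN_eq_sum]
  rcases Nat.eq_zero_or_pos k with hk | hk
  · subst hk
    simp only [Nat.zero_sub, range_zero, sum_empty]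
    have : (p : ℕ) = 0 := by omega
    simp [this]
  obtain ⟨m, rfl⟩ : ∃ m, k = m + 1 := ⟨k - 1, by omega⟩
  have hm1 : m + 1 - 1 = m := by omega
  rw [hm1]
  rcases Nat.eq_zero_or_pos (p : ℕ) with hp0 | hp1
  · -- p = 0
    rw [if_neg (by omega), if_pos (by omega), Finset.sum_range_succ']
    have h0 : fI τ p 0 = 1 := by
      have := fI_c3 τ p (show (p:ℕ) < m + 1 by omega)
      rwa [hp0] at this
    have hrw : ∀ i ∈ range m, fI τ p (i + 1) = gI τ i := by
      intro i hi
      simp only [Finset.mem_range] at hi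
      exact fI_c4 τ p (by omega) (by omega)
    rw [Finset.sum_congr rfl hrw, h0]
  rcases eq_or_lt_of_le hp with hpk | hpk
  · -- p = k
    rw [if_neg (by omega), if_neg (by omega), Finset.sum_range_succ]
    have htop : fI τ p m = 0 := by
      have h2 := fI_c2 τ p hp1
      rw [show (p : ℕ) - 1 = m by omega] at h2
      exact h2
    have hrw : ∀ i ∈ range m, fI τ p i = gI τ i := by
      intro i hi
      simp only [Finset.mem_range] at hi
      exact fI_c1 τ p (by omega)
    rw [Finset.sum_congr rfl hrw, htop]
  · -- 1 ≤ p < k = m+1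
    have hbot : ∑ i ∈ Finset.Ico 0 (p : ℕ), fI τ p i
        = ∑ i ∈ Finset.Ico 0 ((p : ℕ) - 1), gI τ i := by
      have hpe : (p : ℕ) - 1 + 1 = (p : ℕ) := by omega
      rw [show Finset.Ico 0 (p : ℕ) = Finset.Ico 0 (((p:ℕ) - 1) + 1) by rw [hpe],
        Finset.sum_Ico_succ_top (by omega), fI_c2 τ p hp1, add_zero]
      apply Finset.sum_congr rfl
      intro i hi
      simp only [Finset.mem_Ico] at hi
      exact fI_c1 τ p (by omega)
    have htopf : ∑ i ∈ Finset.Ico (p : ℕ) (m + 1), fI τ p i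
        = 1 + ∑ i ∈ Finset.Ico (p : ℕ) m, gI τ i := by
      rw [Finset.sum_eq_sum_Ico_succ_bot hpk, fI_c3 τ p hpk]
      congr 1
      rw [Finset.sum_Ico_eq_sum_range, Finset.sum_Ico_eq_sum_range]
      have hlen : m + 1 - ((p : ℕ) + 1) = m - (p : ℕ) := by omega
      rw [hlen]
      apply Finset.sum_congr rfl
      intro j hj
      simp only [Finset.mem_range] at hj
      have he : (p : ℕ) + 1 + j = ((p : ℕ) + j) + 1 := by omega
      rw [he, fI_c4 τ p (by omega) (by omega)]
    have hg : ∑ i ∈ range m, gI τ i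
        = (∑ i ∈ Finset.Ico 0 ((p : ℕ) - 1), gI τ i) + (gI τ ((p : ℕ) - 1)
          + ∑ i ∈ Finset.Ico (p : ℕ) m, gI τ i) := by
      rw [Finset.range_eq_Ico,
        ← Finset.sum_Ico_consecutive (gI τ) (Nat.zero_le ((p : ℕ) - 1))
          (by omega : (p : ℕ) - 1 ≤ m),
        Finset.sum_eq_sum_Ico_succ_bot (by omega : (p : ℕ) - 1 < m) (gI τ),
        show (p : ℕ) - 1 + 1 = (p : ℕ) by omega]
    rw [hg, Finset.range_eq_Ico,
      ← Finset.sum_Ico_consecutive (fI τ p) (Nat.zero_le (p : ℕ)) (by omega : (p:ℕ) ≤ m + 1),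
      hbot, htopf, if_pos hpk]
    have hgi : gI τ ((p : ℕ) - 1) = 0 ∨ gI τ ((p : ℕ) - 1) = 1 := by
      unfold gI; split <;> simp
    rcases hgi with h | h
    · rw [if_neg (by simp [h]), h]
      try omega
    · rw [if_pos (by exact ⟨hp1, hpk, h⟩), h]
      try omega

lemma desN_le' {n : ℕ} (π : Equiv.Perm (Fin n)) : desN π ≤ n - 1 := by
  rw [desN]
  exact le_trans (Finset.card_filter_le _ _) (by simp)

/-- A `Good` slot keeps the number of descents; others increase it by 1. -/
def Good (τ : Equiv.Perm (Fin k)) (p : Fin (k + 1)) : Prop :=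
  (p : ℕ) = k ∨ (1 ≤ (p : ℕ) ∧ (p : ℕ) < k ∧ gI τ ((p : ℕ) - 1) = 1)

instance (τ : Equiv.Perm (Fin k)) : DecidablePred (Good τ) := fun _ => by
  unfold Good; infer_instance

lemma desN_ins_eq :
    desN (ins τ p) = if Good τ p then desN τ else desN τ + 1 := by
  have h := desN_ins_count τ p
  have hp : (p : ℕ) ≤ k := Nat.lt_succ_iff.mp p.isLt
  show desN (ins τ p) = if (p : ℕ) = k ∨ (1 ≤ (p : ℕ) ∧ (p : ℕ) < k ∧ gI τ ((p : ℕ) - 1) = 1) then desN τ else desN τ + 1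
  by_cases h1 : (p : ℕ) = k
  · rw [if_pos (Or.inl h1)]
    rw [if_neg (by omega), if_neg (by omega)] at h
    omega
  · by_cases h2 : 1 ≤ (p : ℕ) ∧ (p : ℕ) < k ∧ gI τ ((p : ℕ) - 1) = 1
    · rw [if_pos (Or.inr h2)]
      rw [if_pos h2, if_pos (by omega)] at h
      omega
    · rw [if_neg (by tauto)]
      rw [if_neg h2, if_pos (by omega)] at h
      omega

lemma card_good (τ : Equiv.Perm (Fin k)) :
    (Finset.univ.filter (Good τ)).card = desN τ + 1 := by
  rw [Finset.card_filter]
  have hrw : ∀ p : Fin (k+1), (if Good τ p then 1 else 0)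
      = (fun j : ℕ => if (j = k ∨ (1 ≤ j ∧ j < k ∧ gI τ (j - 1) = 1)) then 1 else 0) (p : ℕ) :=
    fun p => rfl
  rw [Finset.sum_congr rfl (fun p _ => hrw p),
    Fin.sum_univ_eq_sum_range (fun j => if (j = k ∨ (1 ≤ j ∧ j < k ∧ gI τ (j - 1) = 1)) then 1 else 0) (k+1),
    Finset.sum_range_succ, if_pos (Or.inl rfl)]
  have h2 : ∀ j ∈ range k, (if (j = k ∨ (1 ≤ j ∧ j < k ∧ gI τ (j - 1) = 1)) then 1 else 0)
      = (if (1 ≤ j ∧ gI τ (j - 1) = 1) then 1 else 0) := by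
    intro j hj
    simp only [Finset.mem_range] at hj
    by_cases hc : 1 ≤ j ∧ gI τ (j - 1) = 1
    · rw [if_pos (Or.inr ⟨hc.1, hj, hc.2⟩), if_pos hc]
    · have hneg : ¬ (j = k ∨ 1 ≤ j ∧ j < k ∧ gI τ (j - 1) = 1) := by
        rintro (h | ⟨ha, hb, hc2⟩)
        · omega
        · exact hc ⟨ha, hc2⟩
      rw [if_neg hneg, if_neg hc]
  rw [Finset.sum_congr rfl h2]
  congr 1
  rcases Nat.eq_zero_or_pos k with hk | hk
  · subst hk
    simp [desN]
  obtain ⟨m, rfl⟩ : ∃ m, k = m + 1 := ⟨k - 1, by omega⟩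
  rw [Finset.sum_range_succ', if_neg (by omega)]
  rw [desN_eq_sum]
  have hm1 : m + 1 - 1 = m := by omega
  rw [hm1, add_zero]
  apply Finset.sum_congr rfl
  intro i _
  have : i + 1 - 1 = i := by omega
  rw [this]
  by_cases hgi : gI τ i = 1
  · rw [if_pos ⟨by omega, hgi⟩, hgi]
  · have : gI τ i = 0 := by unfold gI at hgi ⊢; split at hgi <;> simp_all
    rw [if_neg (by tauto), this]

lemma sum_slots (τ : Equiv.Perm (Fin k)) :
    ∑ p : Fin (k + 1), (Polynomial.X : Polynomial ℤ) ^ desN (ins τ p)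
      = (desN τ + 1) • (Polynomial.X : Polynomial ℤ) ^ desN τ
        + (k - desN τ) • (Polynomial.X : Polynomial ℤ) ^ (desN τ + 1) := by
  have h1 : ∀ p : Fin (k+1), (Polynomial.X : Polynomial ℤ) ^ desN (ins τ p)
      = if Good τ p then (Polynomial.X : Polynomial ℤ) ^ desN τ
        else (Polynomial.X : Polynomial ℤ) ^ (desN τ + 1) := by
    intro p
    rw [desN_ins_eq, apply_ite (fun d => (Polynomial.X : Polynomial ℤ) ^ d)]
  have h4 : (Finset.univ.filter (fun x => ¬ Good τ x)).card = k - desN τ := by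
    have h3 := Finset.card_filter_add_card_filter_not
      (s := (Finset.univ : Finset (Fin (k+1)))) (p := Good τ)
    rw [card_good] at h3
    simp only [Finset.card_univ, Fintype.card_fin] at h3
    have hd : desN τ ≤ k := le_trans (desN_le' τ) (Nat.sub_le k 1)
    omega
  rw [Finset.sum_congr rfl (fun p _ => h1 p), Finset.sum_ite, Finset.sum_const, Finset.sum_const,
    card_good, h4]

lemma ins_eq_last_iff (τ : Equiv.Perm (Fin k)) (p i : Fin (k + 1)) :
    ins τ p i = Fin.last k ↔ i = p := by
  constructor
  · intro h
    rw [ins_apply] at h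
    have hx : mu p i = Fin.last k := by
      by_contra hne
      obtain ⟨j, hj⟩ := Fin.exists_castSucc_eq.2 hne
      rw [← hj, extLast_castSucc] at h
      exact absurd h (Fin.castSucc_lt_last _).ne
    exact (mu p).injective (hx.trans (mu_apply_self p).symm)
  · rintro rfl
    rw [ins_apply, mu_apply_self, extLast_last]

lemma ins_bijective :
    Function.Bijective (fun q : Equiv.Perm (Fin k) × Fin (k + 1) => ins q.1 q.2) := by
  rw [Fintype.bijective_iff_injective_and_card]
  constructor
  · rintro ⟨τ1, p1⟩ ⟨τ2, p2⟩ h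
    simp only at h
    have hp : p1 = p2 := by
      have h1 : ins τ1 p1 p1 = Fin.last k := (ins_eq_last_iff τ1 p1 p1).2 rfl
      rw [h] at h1
      exact ((ins_eq_last_iff τ2 p2 p1).1 h1)
    subst hp
    have hτ : τ1 = τ2 := by
      apply Equiv.ext
      intro j
      have h2 : extLast τ1 (mu p1 ((mu p1).symm j.castSucc))
          = extLast τ2 (mu p1 ((mu p1).symm j.castSucc)) := by
        have := congrArg (fun (σ : Equiv.Perm (Fin (k+1))) => σ ((mu p1).symm j.castSucc)) h
        simpa [ins_apply] using this
      rw [Equiv.apply_symm_apply, extLast_castSucc, extLast_castSucc] at h2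
      exact Fin.castSucc_injective _ h2
    rw [hτ]
  · simp [Fintype.card_prod, Fintype.card_perm, Fintype.card_fin, Nat.factorial_succ, mul_comm]

end counting

lemma euler_rec (k : ℕ) :
    eulerPoly (Polynomial ℤ) (k + 1) Polynomial.X
      = (1 + (k : Polynomial ℤ) * Polynomial.X) * eulerPoly (Polynomial ℤ) k Polynomial.X
        + Polynomial.X * (1 - Polynomial.X)
          * Polynomial.derivative (eulerPoly (Polynomial ℤ) k Polynomial.X) := by
  have hbij := Fintype.sum_bijective _ (ins_bijective (k := k))
    (fun q : Equiv.Perm (Fin k) × Fin (k+1) => (Polynomial.X : Polynomial ℤ) ^ desN (ins q.1 q.2))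
    (fun σ => (Polynomial.X : Polynomial ℤ) ^ desN σ) (fun q => rfl)
  rw [eulerPoly, ← hbij, Fintype.sum_prod_type]
  have hτ : ∀ τ : Equiv.Perm (Fin k),
      (∑ p : Fin (k+1), (Polynomial.X : Polynomial ℤ) ^ desN (ins τ p))
      = (1 + (k : Polynomial ℤ) * Polynomial.X) * Polynomial.X ^ desN τ
        + Polynomial.X * (1 - Polynomial.X) * Polynomial.derivative (Polynomial.X ^ desN τ) := by
    intro τ
    rw [sum_slots]
    have hd : desN τ ≤ k := le_trans (desN_le' τ) (Nat.sub_le k 1)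
    rw [nsmul_eq_mul, nsmul_eq_mul, Nat.cast_sub hd]
    rcases Nat.eq_zero_or_pos (desN τ) with h0 | h0
    · rw [h0]
      simp only [pow_zero, pow_one, Nat.cast_zero, Nat.cast_add, Nat.cast_one]
      rw [Polynomial.derivative_one]
      ring
    · obtain ⟨e, he⟩ : ∃ e, desN τ = e + 1 := ⟨desN τ - 1, by omega⟩
      rw [he, Polynomial.derivative_X_pow]
      have hee : e + 1 - 1 = e := by omega
      rw [hee, Polynomial.C_eq_natCast]
      push_cast
      ring
  rw [Finset.sum_congr rfl (fun τ _ => hτ τ), eulerPoly, Finset.mul_sum,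
    Polynomial.derivative_sum, Finset.mul_sum, ← Finset.sum_add_distrib]

/-! ### Palindromicity of the Eulerian polynomial -/

lemma pf_ne {n : ℕ} (π : Equiv.Perm (Fin n)) {i j : ℕ} (hi : i < n) (hj : j < n)
    (hne : i ≠ j) : pf π i ≠ pf π j := by
  rw [pf_of_lt _ hi, pf_of_lt _ hj]
  intro h
  have : π ⟨i, hi⟩ = π ⟨j, hj⟩ := Fin.ext h
  have := π.injective this
  exact hne (by simpa [Fin.ext_iff] using this)

lemma desN_revPerm {n : ℕ} (τ : Equiv.Perm (Fin n)) :
    desN (τ.trans Fin.revPerm) = (n - 1) - desN τ := by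
  have hpf : ∀ i, i < n → pf (τ.trans Fin.revPerm) i = n - 1 - pf τ i := by
    intro i hi
    rw [pf_of_lt _ hi, pf_of_lt _ hi]
    simp only [Equiv.trans_apply, Fin.revPerm_apply, Fin.val_rev]
    omega
  have hcond : ∀ i ∈ range (n - 1),
      (pf (τ.trans Fin.revPerm) (i+1) < pf (τ.trans Fin.revPerm) i)
        ↔ ¬ (pf τ (i+1) < pf τ i) := by
    intro i hi
    simp only [Finset.mem_range] at hi
    have hi1 : i + 1 < n := by omega
    have hi0 : i < n := by omega
    rw [hpf _ hi1, hpf _ hi0]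
    have h1 := pf_lt τ hi1
    have h2 := pf_lt τ hi0
    have h3 := pf_ne τ hi1 hi0 (by omega)
    omega
  rw [desN, desN, Finset.filter_congr hcond]
  have := Finset.card_filter_add_card_filter_not
    (s := range (n-1)) (p := fun i => pf τ (i+1) < pf τ i)
  simp only [Finset.card_range] at this
  omega

lemma reflect_sum {ι : Type*} (s : Finset ι) (f : ι → Polynomial ℤ) (N : ℕ) :
    Polynomial.reflect N (∑ x ∈ s, f x) = ∑ x ∈ s, Polynomial.reflect N (f x) := by
  classical
  induction s using Finset.induction with
  | empty => simp [Polynomial.reflect_zero]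
  | insert _ _ h ih =>
      rw [Finset.sum_insert h, Finset.sum_insert h, Polynomial.reflect_add, ih]

lemma reflect_euler (k : ℕ) :
    Polynomial.reflect (k - 1) (eulerPoly (Polynomial ℤ) k Polynomial.X)
      = eulerPoly (Polynomial ℤ) k Polynomial.X := by
  rw [eulerPoly, reflect_sum]
  have h1 : ∀ τ : Equiv.Perm (Fin k),
      Polynomial.reflect (k-1) ((Polynomial.X : Polynomial ℤ) ^ desN τ)
        = Polynomial.X ^ desN (τ.trans Fin.revPerm) := by
    intro τ
    rw [Polynomial.reflect_monomial, Polynomial.revAt_le (desN_le' τ), desN_revPerm]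
  rw [Finset.sum_congr rfl (fun τ _ => h1 τ)]
  have hbij : Function.Bijective (fun τ : Equiv.Perm (Fin k) => τ.trans Fin.revPerm) := by
    constructor
    · intro a b h
      ext x
      have hh := congrArg (fun σ : Equiv.Perm (Fin k) => σ x) h
      simp only [Equiv.trans_apply, Fin.revPerm_apply] at hh
      exact congrArg Fin.val (Fin.rev_injective hh)
    · intro b
      refine ⟨b.trans Fin.revPerm, ?_⟩
      ext x
      simp [Fin.rev_rev]
  exact Fintype.sum_bijective _ hbij _ (fun σ => (Polynomial.X : Polynomial ℤ) ^ desN σ)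
    (fun τ => rfl)

/-! ### The polynomials `U k = (1+X)^k * A_k` -/

noncomputable section

open Polynomial

def Ae (k : ℕ) : Polynomial ℤ := eulerPoly (Polynomial ℤ) k Polynomial.X

def Ue (k : ℕ) : Polynomial ℤ := (1 + Polynomial.X) ^ k * Ae k

lemma Ae_natDegree (k : ℕ) : (Ae k).natDegree ≤ k - 1 := by
  rw [Ae, eulerPoly]
  apply Polynomial.natDegree_sum_le_of_forall_le
  intro τ _
  rw [Polynomial.natDegree_X_pow]
  exact desN_le' τ

lemma onePlusX_natDegree : ((1 : Polynomial ℤ) + Polynomial.X).natDegree = 1 := by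
  rw [add_comm, ← Polynomial.C_1, Polynomial.natDegree_X_add_C]

lemma onePlusX_pow_natDegree (k : ℕ) :
    (((1 : Polynomial ℤ) + Polynomial.X) ^ k).natDegree ≤ k := by
  refine le_trans (Polynomial.natDegree_pow_le) ?_
  rw [onePlusX_natDegree]; omega

lemma Ue_natDegree (k : ℕ) : (Ue k).natDegree ≤ 2 * k - 1 := by
  rw [Ue]
  refine le_trans (Polynomial.natDegree_mul_le) ?_
  have h1 := onePlusX_pow_natDegree k
  have h2 := Ae_natDegree k
  rcases Nat.eq_zero_or_pos k with hk | hk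
  · subst hk; simp at h1 h2 ⊢; omega
  · omega

lemma Ue_coeff_eq_zero (k : ℕ) {j : ℕ} (h : 2 * k ≤ j) (hj : 1 ≤ j) : (Ue k).coeff j = 0 := by
  apply Polynomial.coeff_eq_zero_of_natDegree_lt
  have := Ue_natDegree k
  omega

lemma reflect_onePlusX_pow (k : ℕ) :
    Polynomial.reflect k (((1 : Polynomial ℤ) + Polynomial.X) ^ k)
      = ((1 : Polynomial ℤ) + Polynomial.X) ^ k := by
  induction k with
  | zero =>
      rw [pow_zero, show (1 : Polynomial ℤ) = Polynomial.X ^ 0 from (pow_zero _).symm,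
        Polynomial.reflect_monomial]
      rfl
  | succ k ih =>
      rw [pow_succ, show k + 1 = k + 1 from rfl,
        Polynomial.reflect_mul _ _ (onePlusX_pow_natDegree k) (by rw [onePlusX_natDegree]),
        ih]
      congr 1
      have : (1 : Polynomial ℤ) + Polynomial.X = Polynomial.X ^ 0 + Polynomial.X ^ 1 := by
        simp
      rw [this, Polynomial.reflect_add, Polynomial.reflect_monomial, Polynomial.reflect_monomial]
      simp [add_comm]

lemma reflect_Ae (k : ℕ) : Polynomial.reflect (k - 1) (Ae k) = Ae k := reflect_euler k

lemma Ue_reflect (k : ℕ) (hk : 1 ≤ k) :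
    Polynomial.reflect (2 * k - 1) (Ue k) = Ue k := by
  rw [Ue, show 2 * k - 1 = k + (k - 1) by omega,
    Polynomial.reflect_mul _ _ (onePlusX_pow_natDegree k) (Ae_natDegree k),
    reflect_onePlusX_pow, reflect_Ae]

lemma Ue_coeff_symm (k : ℕ) (hk : 1 ≤ k) {i : ℕ} (hi : i ≤ 2 * k - 1) :
    (Ue k).coeff i = (Ue k).coeff (2 * k - 1 - i) := by
  conv_lhs => rw [← Ue_reflect k hk]
  rw [Polynomial.coeff_reflect, Polynomial.revAt_le hi]

lemma Ue_rec (k : ℕ) :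
    Ue (k + 1) = (1 + Polynomial.X + 2 * (k : Polynomial ℤ) * Polynomial.X ^ 2) * Ue k
      + Polynomial.X * (1 - Polynomial.X ^ 2) * Polynomial.derivative (Ue k) := by
  have hAe : Ae (k+1) = (1 + (k : Polynomial ℤ) * Polynomial.X) * Ae k
      + Polynomial.X * (1 - Polynomial.X) * Polynomial.derivative (Ae k) := euler_rec k
  rw [Ue, Ue, hAe, Polynomial.derivative_mul, Polynomial.derivative_pow]
  have hD : Polynomial.derivative ((1 : Polynomial ℤ) + Polynomial.X) = 1 := by
    rw [Polynomial.derivative_add, Polynomial.derivative_one, Polynomial.derivative_X, zero_add]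
  rw [hD, Polynomial.C_eq_natCast]
  rcases k with _ | j
  · push_cast
    simp only [pow_zero, pow_one, Nat.cast_zero]
    ring
  · rw [show j + 1 - 1 = j from rfl, pow_succ, pow_succ]
    push_cast
    ring

/-- expansion of the recurrence in a `coeff`-friendly form -/
lemma Ue_expand (k : ℕ) :
    Ue (k + 1) = Ue k + Ue k * Polynomial.X ^ 1
      + ((2 * k : ℕ) : Polynomial ℤ) * (Ue k * Polynomial.X ^ 2)
      + (Polynomial.derivative (Ue k)) * Polynomial.X ^ 1
      - (Polynomial.derivative (Ue k)) * Polynomial.X ^ 3 := by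
  rw [Ue_rec]
  push_cast
  ring

lemma cf0 (k : ℕ) : (Ue (k + 1)).coeff 0 = (Ue k).coeff 0 := by
  rw [Ue_expand]
  simp only [Polynomial.coeff_sub, Polynomial.coeff_add, Polynomial.coeff_natCast_mul,
    Polynomial.coeff_mul_X_pow']
  norm_num

lemma cf1 (k : ℕ) : (Ue (k + 1)).coeff 1 = 2 * (Ue k).coeff 1 + (Ue k).coeff 0 := by
  rw [Ue_expand]
  simp only [Polynomial.coeff_sub, Polynomial.coeff_add, Polynomial.coeff_natCast_mul,
    Polynomial.coeff_mul_X_pow', Polynomial.coeff_derivative]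
  norm_num
  ring

lemma cf2p (k i : ℕ) :
    (Ue (k + 1)).coeff (i + 2)
      = ((i : ℤ) + 3) * (Ue k).coeff (i + 2) + (Ue k).coeff (i + 1)
        + (2 * (k : ℤ) - (i : ℤ)) * (Ue k).coeff i := by
  rw [Ue_expand]
  simp only [Polynomial.coeff_sub, Polynomial.coeff_add, Polynomial.coeff_natCast_mul,
    Polynomial.coeff_mul_X_pow', Polynomial.coeff_derivative]
  rcases i with _ | i'
  · norm_num
    ring
  · have h1 : (1:ℕ) ≤ i' + 1 + 2 := by omega
    have h2 : (2:ℕ) ≤ i' + 1 + 2 := by omega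
    have h3 : (3:ℕ) ≤ i' + 1 + 2 := by omega
    rw [if_pos h1, if_pos h2, if_pos h3]
    have e1 : i' + 1 + 2 - 1 = i' + 2 := by omega
    have e2 : i' + 1 + 2 - 2 = i' + 1 := by omega
    have e3 : i' + 1 + 2 - 3 = i' := by omega
    rw [e1, e2, e3]
    push_cast
    ring

lemma nonneg_coeff_mul (p q : Polynomial ℤ) (hp : ∀ i, 0 ≤ p.coeff i)
    (hq : ∀ i, 0 ≤ q.coeff i) : ∀ i, 0 ≤ (p * q).coeff i := by
  intro i
  rw [Polynomial.coeff_mul]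
  exact Finset.sum_nonneg (fun x _ => mul_nonneg (hp _) (hq _))

lemma Ae_coeff_nonneg (k : ℕ) : ∀ i, 0 ≤ (Ae k).coeff i := by
  intro i
  rw [Ae, eulerPoly, Polynomial.finset_sum_coeff]
  apply Finset.sum_nonneg
  intro τ _
  rw [Polynomial.coeff_X_pow]
  split <;> norm_num

lemma onePlusX_pow_coeff_nonneg (k : ℕ) :
    ∀ i, 0 ≤ (((1 : Polynomial ℤ) + Polynomial.X) ^ k).coeff i := by
  induction k with
  | zero => intro i; simp [Polynomial.coeff_one]; split <;> norm_num
  | succ k ih =>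
      rw [pow_succ]
      apply nonneg_coeff_mul _ _ ih
      intro i
      rw [Polynomial.coeff_add]
      have h1 : (0:ℤ) ≤ (1 : Polynomial ℤ).coeff i := by
        rw [Polynomial.coeff_one]; split <;> norm_num
      have h2 : (0:ℤ) ≤ (Polynomial.X : Polynomial ℤ).coeff i := by
        rw [Polynomial.coeff_X]; split <;> norm_num
      omega

lemma Ue_coeff_nonneg (k : ℕ) : ∀ i, 0 ≤ (Ue k).coeff i := by
  rw [Ue]
  exact nonneg_coeff_mul _ _ (onePlusX_pow_coeff_nonneg k) (Ae_coeff_nonneg k)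

lemma Ue_mono (k : ℕ) : ∀ j, j < k → (Ue k).coeff j ≤ (Ue k).coeff (j + 1) := by
  induction k with
  | zero => intro j hj; omega
  | succ k ih =>
      intro j hj
      rcases Nat.lt_or_ge j k with hjk | hjk
      · -- j < k
        rcases j with _ | _ | i
        · -- j = 0
          rw [cf0, cf1]
          have := Ue_coeff_nonneg k 1
          linarith
        · -- j = 1, k ≥ 2
          rw [cf1, show (1:ℕ) + 1 = 0 + 2 from rfl, cf2p]
          have h1 : (Ue k).coeff 1 ≤ (Ue k).coeff 2 := ih 1 (by omega)
          have h0 := Ue_coeff_nonneg k 0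
          have h2 := Ue_coeff_nonneg k 2
          have hk2 : (1:ℤ) ≤ 2 * (k:ℤ) := by
            have : (2:ℕ) ≤ k := by omega
            have : (2:ℤ) ≤ (k:ℤ) := by exact_mod_cast this
            linarith
          have P2 : 0 ≤ (2 * (k:ℤ) - 1) * (Ue k).coeff 0 :=
            mul_nonneg (by linarith) h0
          push_cast
          nlinarith [h1, h2, P2]
        · -- j = i + 2 < k
          rw [show i + 2 + 1 = (i + 1) + 2 from rfl, cf2p, cf2p]
          have d3 : (Ue k).coeff (i + 2) ≤ (Ue k).coeff (i + 3) := by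
            have := ih (i + 2) (by omega)
            simpa using this
          have d2 : (Ue k).coeff (i + 1) ≤ (Ue k).coeff (i + 2) := ih (i + 1) (by omega)
          have d1 : (Ue k).coeff i ≤ (Ue k).coeff (i + 1) := ih i (by omega)
          have hc1 : (0:ℤ) ≤ (i:ℤ) + 3 := by positivity
          have hc2 : (0:ℤ) ≤ 2 * (k:ℤ) - (i:ℤ) - 1 := by
            have : i + 2 < k := hjk
            have : (i:ℤ) + 2 < (k:ℤ) := by exact_mod_cast this
            linarith
          have P1 : 0 ≤ ((i:ℤ) + 3) * ((Ue k).coeff (i + 3) - (Ue k).coeff (i + 2)) :=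
            mul_nonneg hc1 (by linarith)
          have P2 : 0 ≤ (2 * (k:ℤ) - (i:ℤ) - 1) * ((Ue k).coeff (i + 1) - (Ue k).coeff i) :=
            mul_nonneg hc2 (by linarith)
          have EQ : (((i:ℤ) + 1) + 3) * (Ue k).coeff (i + 1 + 2) + (Ue k).coeff (i + 1 + 1)
                + (2 * (k:ℤ) - ((i:ℤ) + 1)) * (Ue k).coeff (i + 1)
                - ((((i:ℤ)) + 3) * (Ue k).coeff (i + 2) + (Ue k).coeff (i + 1)
                  + (2 * (k:ℤ) - (i:ℤ)) * (Ue k).coeff i)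
              = ((i:ℤ) + 3) * ((Ue k).coeff (i + 3) - (Ue k).coeff (i + 2))
                + (2 * (k:ℤ) - (i:ℤ) - 1) * ((Ue k).coeff (i + 1) - (Ue k).coeff i)
                + ((Ue k).coeff (i + 3) - (Ue k).coeff i)
                + ((Ue k).coeff (i + 2) - (Ue k).coeff (i + 1)) := by
            have e1 : i + 1 + 2 = i + 3 := by omega
            have e2 : i + 1 + 1 = i + 2 := by omega
            rw [e1, e2]
            ring
          have chain : (Ue k).coeff i ≤ (Ue k).coeff (i + 3) := by linarith
          push_cast at EQ ⊢
          linarith [P1, P2, EQ, chain, d2]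
      · -- j = k : use palindromicity
        have hjk' : j = k := by omega
        rw [hjk']
        have hsym := Ue_coeff_symm (k + 1) (by omega) (i := k)
          (by omega)
        rw [show 2 * (k + 1) - 1 - k = k + 1 by omega] at hsym
        rw [hsym]

/-! ### The summed polynomials and the key identity -/

open Polynomial

def Me (n : ℕ) : Polynomial ℤ := ∑ k ∈ range (n+1), (n.choose k : Polynomial ℤ) * Ue k

def Re (n : ℕ) : Polynomial ℤ :=
  ∑ k ∈ range (n+1), (n.choose k : Polynomial ℤ) * (Polynomial.X ^ (2*(n-k)) * Ue k)

lemma pascal_sum (m : ℕ) (f : ℕ → Polynomial ℤ) :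
    ∑ k ∈ range (m+2), ((m+1).choose k : Polynomial ℤ) * f k
      = ∑ k ∈ range (m+1), (m.choose k : Polynomial ℤ) * f k
        + ∑ k ∈ range (m+1), (m.choose k : Polynomial ℤ) * f (k+1) := by
  have step1 := Finset.sum_range_succ' (fun k => ((m+1).choose k : Polynomial ℤ) * f k) (m+1)
  rw [step1]
  have key : ∀ k, (((m+1).choose (k+1) : ℕ) : Polynomial ℤ) * f (k+1)
      = (m.choose k : Polynomial ℤ) * f (k+1) + (m.choose (k+1) : Polynomial ℤ) * f (k+1) := by
    intro k
    rw [Nat.choose_succ_succ]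
    push_cast
    ring
  rw [Finset.sum_congr rfl (fun k _ => key k), Finset.sum_add_distrib]
  have h2 : (∑ k ∈ range (m+1), (m.choose (k+1) : Polynomial ℤ) * f (k+1))
      + ((m+1).choose 0 : Polynomial ℤ) * f 0
      = ∑ k ∈ range (m+1), (m.choose k : Polynomial ℤ) * f k := by
    rw [Finset.sum_range_succ, Nat.choose_succ_self]
    rw [Finset.sum_range_succ' (fun k => (m.choose k : Polynomial ℤ) * f k) m]
    simp
  rw [add_assoc, h2]
  ring

lemma choose_shift_nat (m k : ℕ) : (k+1) * ((m+1).choose (k+1)) = (m+1) * (m.choose k) := by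
  rw [mul_comm]
  exact (Nat.add_one_mul_choose_eq m k).symm

lemma choose_shift (m k : ℕ) :
    ((k+1 : ℕ) : Polynomial ℤ) * (((m+1).choose (k+1) : ℕ) : Polynomial ℤ)
      = ((m+1 : ℕ) : Polynomial ℤ) * ((m.choose k : ℕ) : Polynomial ℤ) := by
  have h := choose_shift_nat m k
  exact_mod_cast h

lemma choose_sub_nat (s k : ℕ) : (s+1-k) * ((s+1).choose k) = (s+1) * (s.choose k) := by
  calc (s+1-k) * ((s+1).choose k) = ((s+1).choose k) * (s+1-k) := mul_comm _ _
    _ = (s+1).choose (k+1) * (k+1) := (Nat.choose_succ_right_eq (s+1) k).symm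
    _ = (s+1) * (s.choose k) := (Nat.add_one_mul_choose_eq s k).symm

lemma choose_sub (s k : ℕ) :
    (((s+1-k) * (s+1).choose k : ℕ) : Polynomial ℤ)
      = (((s+1) * s.choose k : ℕ) : Polynomial ℤ) := by
  rw [choose_sub_nat]

lemma deriv_natCast_mul (c : ℕ) (p : Polynomial ℤ) :
    Polynomial.derivative ((c : Polynomial ℤ) * p) = (c : Polynomial ℤ) * Polynomial.derivative p := by
  rw [Polynomial.derivative_mul, Polynomial.derivative_natCast, zero_mul, zero_add]

/-- recurrence for `Me`. -/
lemma Me_rec (s : ℕ) :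
    Me (s+2) = (2 + Polynomial.X + 2*((s+1 : ℕ) : Polynomial ℤ)*Polynomial.X^2) * Me (s+1)
      + Polynomial.X*(1-Polynomial.X^2)*Polynomial.derivative (Me (s+1))
      - 2*((s+1 : ℕ) : Polynomial ℤ)*Polynomial.X^2 * Me s := by
  have hM1 : Me (s+1) = Me s + ∑ k ∈ range (s+1), (s.choose k : Polynomial ℤ) * Ue (k+1) := by
    rw [Me, pascal_sum s Ue, Me]
  have hM2 : Me (s+2) = Me (s+1) + ∑ k ∈ range (s+2), ((s+1).choose k : Polynomial ℤ) * Ue (k+1) := by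
    rw [Me, pascal_sum (s+1) Ue, Me]
  -- expand the second sum of hM2 using the recurrence for Ue
  have hexp : ∀ k, ((s+1).choose k : Polynomial ℤ) * Ue (k+1)
      = (1 + Polynomial.X) * (((s+1).choose k : Polynomial ℤ) * Ue k)
        + 2*Polynomial.X^2 * (((k:ℕ) : Polynomial ℤ) * (((s+1).choose k : ℕ) : Polynomial ℤ) * Ue k)
        + Polynomial.X*(1-Polynomial.X^2) * (((s+1).choose k : Polynomial ℤ) * Polynomial.derivative (Ue k)) := by
    intro k
    rw [Ue_rec k]
    push_cast
    ring
  have hsum : ∑ k ∈ range (s+2), ((s+1).choose k : Polynomial ℤ) * Ue (k+1)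
      = (1 + Polynomial.X) * Me (s+1)
        + 2*Polynomial.X^2 * (((s+1:ℕ) : Polynomial ℤ) * (Me (s+1) - Me s))
        + Polynomial.X*(1-Polynomial.X^2) * Polynomial.derivative (Me (s+1)) := by
    rw [Finset.sum_congr rfl (fun k _ => hexp k), Finset.sum_add_distrib, Finset.sum_add_distrib]
    congr 1
    · congr 1
      · rw [← Finset.mul_sum, Me]
      · -- the k-weighted sum
        rw [← Finset.mul_sum]
        congr 1
        have hK : ∑ k ∈ range (s+2),
            ((k:ℕ) : Polynomial ℤ) * (((s+1).choose k : ℕ) : Polynomial ℤ) * Ue k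
            = ((s+1:ℕ) : Polynomial ℤ) * ∑ j ∈ range (s+1), (s.choose j : Polynomial ℤ) * Ue (j+1) := by
          rw [Finset.sum_range_succ'
            (fun k => ((k:ℕ) : Polynomial ℤ) * (((s+1).choose k : ℕ) : Polynomial ℤ) * Ue k) (s+1)]
          simp only [Nat.cast_zero, zero_mul, add_zero]
          rw [Finset.mul_sum]
          apply Finset.sum_congr rfl
          intro j _
          rw [← mul_assoc, choose_shift s j]
          try ring
        rw [hK]
        have : ∑ j ∈ range (s+1), (s.choose j : Polynomial ℤ) * Ue (j+1) = Me (s+1) - Me s := by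
          rw [hM1]; ring
        rw [this]
    · rw [← Finset.mul_sum]
      congr 1
      rw [Me, Polynomial.derivative_sum]
      apply Finset.sum_congr rfl
      intro k _
      rw [deriv_natCast_mul]
  rw [hM2, hsum]
  ring

set_option maxHeartbeats 1000000 in
/-- recurrence for `Re`. -/
lemma Re_rec (s : ℕ) :
    Re (s+2) = (1 + Polynomial.X + (2*((s+1 : ℕ) : Polynomial ℤ) + 1)*Polynomial.X^2) * Re (s+1)
      + Polynomial.X*(1-Polynomial.X^2)*Polynomial.derivative (Re (s+1))
      - 2*((s+1 : ℕ) : Polynomial ℤ)*Polynomial.X^2 * Re s := by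
  have hR1 : Re (s+1) = Polynomial.X^2 * Re s
      + ∑ k ∈ range (s+1), (s.choose k : Polynomial ℤ)
        * (Polynomial.X ^ (2*(s-k)) * Ue (k+1)) := by
    rw [Re, pascal_sum s (fun k => Polynomial.X ^ (2*(s+1-k)) * Ue k)]
    congr 1
    · rw [Re, Finset.mul_sum]
      apply Finset.sum_congr rfl
      intro k hk
      simp only [Finset.mem_range] at hk
      rw [show 2*(s+1-k) = 2 + 2*(s-k) by omega, pow_add]
      ring
    · apply Finset.sum_congr rfl
      intro k _
      simp only [Nat.succ_sub_succ_eq_sub]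
  have hR2 : Re (s+2) = Polynomial.X^2 * Re (s+1)
      + ∑ k ∈ range (s+2), ((s+1).choose k : Polynomial ℤ)
        * (Polynomial.X ^ (2*(s+1-k)) * Ue (k+1)) := by
    rw [Re, pascal_sum (s+1) (fun k => Polynomial.X ^ (2*(s+2-k)) * Ue k)]
    congr 1
    · rw [Re, Finset.mul_sum]
      apply Finset.sum_congr rfl
      intro k hk
      simp only [Finset.mem_range] at hk
      rw [show 2*(s+2-k) = 2 + 2*(s+1-k) by omega, pow_add]
      ring
    · apply Finset.sum_congr rfl
      intro k _
      simp only [Nat.succ_sub_succ_eq_sub]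
  -- expand the second sum of hR2
  have hexp : ∀ k, ((s+1).choose k : Polynomial ℤ) * (Polynomial.X ^ (2*(s+1-k)) * Ue (k+1))
      = (1 + Polynomial.X) * (((s+1).choose k : Polynomial ℤ) * (Polynomial.X ^ (2*(s+1-k)) * Ue k))
        + 2*Polynomial.X^2 * (((k:ℕ) : Polynomial ℤ) * (((s+1).choose k : ℕ) : Polynomial ℤ)
            * (Polynomial.X ^ (2*(s+1-k)) * Ue k))
        + Polynomial.X*(1-Polynomial.X^2) * (((s+1).choose k : Polynomial ℤ)
            * (Polynomial.X ^ (2*(s+1-k)) * Polynomial.derivative (Ue k))) := by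
    intro k
    rw [Ue_rec k]
    push_cast
    ring
  -- the derivative of Re (s+1)
  have hder : Polynomial.derivative (Re (s+1))
      = (∑ k ∈ range (s+2), ((s+1).choose k : Polynomial ℤ)
          * (((2*(s+1-k) : ℕ) : Polynomial ℤ) * (Polynomial.X ^ (2*(s+1-k) - 1) * Ue k)))
        + ∑ k ∈ range (s+2), ((s+1).choose k : Polynomial ℤ)
          * (Polynomial.X ^ (2*(s+1-k)) * Polynomial.derivative (Ue k)) := by
    rw [Re, Polynomial.derivative_sum, ← Finset.sum_add_distrib]
    apply Finset.sum_congr rfl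
    intro k _
    rw [deriv_natCast_mul, Polynomial.derivative_mul, Polynomial.derivative_X_pow,
      Polynomial.C_eq_natCast]
    ring
  -- V2 = 2 (s+1) X Re s
  have hV2 : ∑ k ∈ range (s+2), ((s+1).choose k : Polynomial ℤ)
        * (((2*(s+1-k) : ℕ) : Polynomial ℤ) * (Polynomial.X ^ (2*(s+1-k) - 1) * Ue k))
      = 2*((s+1:ℕ) : Polynomial ℤ) * (Polynomial.X * Re s) := by
    rw [Finset.sum_range_succ]
    have htop : ((s+1).choose (s+1) : Polynomial ℤ)
        * (((2*(s+1-(s+1)) : ℕ) : Polynomial ℤ) * (Polynomial.X ^ (2*(s+1-(s+1)) - 1) * Ue (s+1)))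
        = 0 := by
      simp
    rw [htop, add_zero, Re, Finset.mul_sum, Finset.mul_sum]
    apply Finset.sum_congr rfl
    intro k hk
    simp only [Finset.mem_range] at hk
    have hcast : (((s+1).choose k : ℕ) : Polynomial ℤ) * ((2*(s+1-k) : ℕ) : Polynomial ℤ)
        = 2 * ((s+1:ℕ) : Polynomial ℤ) * ((s.choose k : ℕ) : Polynomial ℤ) := by
      have h1 : ((s+1).choose k) * (2*(s+1-k)) = 2 * ((s+1) * s.choose k) := by
        have := choose_sub_nat s k
        calc ((s+1).choose k) * (2*(s+1-k)) = 2 * ((s+1-k) * ((s+1).choose k)) := by ring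
          _ = 2 * ((s+1) * s.choose k) := by rw [this]
      have := congrArg (fun x : ℕ => (x : Polynomial ℤ)) h1
      push_cast at this ⊢
      linear_combination this
    have hpow : (Polynomial.X : Polynomial ℤ) ^ (2*(s+1-k) - 1)
        = Polynomial.X * Polynomial.X ^ (2*(s-k)) := by
      rw [show 2*(s+1-k) - 1 = 1 + 2*(s-k) by omega, pow_add, pow_one]
    rw [hpow]
    calc ((s+1).choose k : Polynomial ℤ)
          * (((2*(s+1-k) : ℕ) : Polynomial ℤ) * (Polynomial.X * Polynomial.X ^ (2*(s-k)) * Ue k))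
        = (((s+1).choose k : ℕ) : Polynomial ℤ) * ((2*(s+1-k) : ℕ) : Polynomial ℤ)
          * (Polynomial.X * Polynomial.X ^ (2*(s-k)) * Ue k) := by ring
      _ = 2 * ((s+1:ℕ) : Polynomial ℤ) * ((s.choose k : ℕ) : Polynomial ℤ)
          * (Polynomial.X * Polynomial.X ^ (2*(s-k)) * Ue k) := by rw [hcast]
      _ = 2 * ((s+1:ℕ) : Polynomial ℤ)
          * (Polynomial.X * ((s.choose k : Polynomial ℤ) * (Polynomial.X ^ (2*(s-k)) * Ue k))) := by
            ring
  -- K2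
  have hK2 : ∑ k ∈ range (s+2), ((k:ℕ) : Polynomial ℤ) * (((s+1).choose k : ℕ) : Polynomial ℤ)
        * (Polynomial.X ^ (2*(s+1-k)) * Ue k)
      = ((s+1:ℕ) : Polynomial ℤ) * (Re (s+1) - Polynomial.X^2 * Re s) := by
    rw [Finset.sum_range_succ'
      (fun k => ((k:ℕ) : Polynomial ℤ) * (((s+1).choose k : ℕ) : Polynomial ℤ)
        * (Polynomial.X ^ (2*(s+1-k)) * Ue k)) (s+1)]
    simp only [Nat.cast_zero, zero_mul, add_zero]
    have hsum2 : ∑ j ∈ range (s+1), (s.choose j : Polynomial ℤ)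
        * (Polynomial.X ^ (2*(s-j)) * Ue (j+1)) = Re (s+1) - Polynomial.X^2 * Re s := by
      rw [hR1]; ring
    rw [← hsum2, Finset.mul_sum]
    apply Finset.sum_congr rfl
    intro j _
    have he : 2*(s+1-(j+1)) = 2*(s-j) := by omega
    rw [he, ← mul_assoc, choose_shift s j]
    try ring
  -- put everything together
  have hsum : ∑ k ∈ range (s+2), ((s+1).choose k : Polynomial ℤ)
        * (Polynomial.X ^ (2*(s+1-k)) * Ue (k+1))
      = (1 + Polynomial.X) * Re (s+1)
        + 2*Polynomial.X^2 * (((s+1:ℕ) : Polynomial ℤ) * (Re (s+1) - Polynomial.X^2 * Re s))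
        + Polynomial.X*(1-Polynomial.X^2)
          * (Polynomial.derivative (Re (s+1)) - 2*((s+1:ℕ) : Polynomial ℤ) * (Polynomial.X * Re s)) := by
    rw [Finset.sum_congr rfl (fun k _ => hexp k), Finset.sum_add_distrib, Finset.sum_add_distrib]
    congr 1
    · congr 1
      · rw [← Finset.mul_sum, Re]
      · rw [← hK2, ← Finset.mul_sum]
        try (apply Finset.sum_congr rfl; intro k _; ring)
    · rw [← Finset.mul_sum]
      congr 1
      have hW2 : ∑ k ∈ range (s+2), ((s+1).choose k : Polynomial ℤ)
          * (Polynomial.X ^ (2*(s+1-k)) * Polynomial.derivative (Ue k))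
          = Polynomial.derivative (Re (s+1)) - 2*((s+1:ℕ) : Polynomial ℤ) * (Polynomial.X * Re s) := by
        rw [hder, hV2]; ring
      rw [hW2]
  rw [hR2, hsum]
  ring

lemma Ae_zero : Ae 0 = 1 := by
  rw [Ae, eulerPoly]
  have h : ∀ π : Equiv.Perm (Fin 0), desN π = 0 := by
    intro π; have := desN_le' π; omega
  rw [Finset.sum_congr rfl (fun π _ => by rw [h π, pow_zero])]
  rw [Finset.sum_const, Finset.card_univ]
  simp

lemma Ae_one : Ae 1 = 1 := by
  rw [Ae, eulerPoly]
  have h : ∀ π : Equiv.Perm (Fin 1), desN π = 0 := by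
    intro π; have := desN_le' π; omega
  rw [Finset.sum_congr rfl (fun π _ => by rw [h π, pow_zero])]
  rw [Finset.sum_const, Finset.card_univ]
  simp

lemma Ue_zero : Ue 0 = 1 := by rw [Ue, pow_zero, one_mul, Ae_zero]

lemma Ue_one : Ue 1 = 1 + Polynomial.X := by rw [Ue, pow_one, Ae_one, mul_one]

/-- The key identity : `Re n = (1 - X) + X * Me n`. -/
lemma key_identity (n : ℕ) : Re n = (1 - Polynomial.X) + Polynomial.X * Me n := by
  induction n using Nat.strong_induction_on with
  | _ n ih =>
    match n with
    | 0 =>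
        rw [Re, Me, Finset.sum_range_one, Finset.sum_range_one, Ue_zero]
        norm_num
    | 1 =>
        rw [Re, Me]
        rw [Finset.sum_range_succ, Finset.sum_range_succ, Finset.sum_range_zero,
          Finset.sum_range_succ, Finset.sum_range_succ, Finset.sum_range_zero]
        simp only [Nat.choose_zero_right, Nat.choose_one_right, Nat.cast_one, Ue_zero, Ue_one]
        norm_num
        ring
    | (s+2) =>
        have g1 := ih (s+1) (by omega)
        have g0 := ih s (by omega)
        rw [Re_rec s, Me_rec s, g1, g0]
        have hD : Polynomial.derivative ((1 - Polynomial.X) + Polynomial.X * Me (s+1))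
            = (Me (s+1) + Polynomial.X * Polynomial.derivative (Me (s+1))) - 1 := by
          rw [Polynomial.derivative_add, Polynomial.derivative_sub, Polynomial.derivative_one,
            Polynomial.derivative_mul, Polynomial.derivative_X]
          ring
        rw [hD]
        ring

/-- coefficient formula for `Re`. -/
lemma Re_coeff (n i : ℕ) :
    (Re n).coeff i = ∑ k ∈ range (n+1),
      (n.choose k : ℤ) * (if 2*(n-k) ≤ i then (Ue k).coeff (i - 2*(n-k)) else 0) := by
  rw [Re, Polynomial.finset_sum_coeff]
  apply Finset.sum_congr rfl
  intro k _
  rw [Polynomial.coeff_natCast_mul, mul_comm (Polynomial.X ^ (2*(n-k))) (Ue k),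
    Polynomial.coeff_mul_X_pow']

lemma Re_coeff_nonneg (n : ℕ) : ∀ i, 0 ≤ (Re n).coeff i := by
  intro i
  rw [Re_coeff]
  apply Finset.sum_nonneg
  intro k _
  apply mul_nonneg (by positivity)
  split
  · exact Ue_coeff_nonneg k _
  · exact le_refl 0

lemma Re_coeff_top (n : ℕ) : (Re n).coeff (2*n) = 1 := by
  rw [Re_coeff]
  rw [Finset.sum_eq_single 0]
  · simp [Ue_zero, Polynomial.coeff_one]
  · intro k hk hk0
    simp only [Finset.mem_range] at hk
    have hk1 : 1 ≤ k := by omega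
    have h1 : 2*(n-k) ≤ 2*n := by omega
    rw [if_pos h1]
    have h2 : 2*n - 2*(n-k) = 2*k := by omega
    rw [h2, Ue_coeff_eq_zero k (le_refl _) (by omega), mul_zero]
  · intro h
    simp at h

lemma Re_coeff_zero_of_gt (n : ℕ) {j : ℕ} (h : 2*n < j) : (Re n).coeff j = 0 := by
  rw [Re_coeff]
  apply Finset.sum_eq_zero
  intro k hk
  simp only [Finset.mem_range] at hk
  split
  · rename_i hle
    rw [Ue_coeff_eq_zero k (by omega) (by omega), mul_zero]
  · rw [mul_zero]

lemma Re_natDegree (n : ℕ) : (Re n).natDegree = 2*n := by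
  apply le_antisymm
  · rw [Polynomial.natDegree_le_iff_coeff_eq_zero]
    intro j hj
    exact Re_coeff_zero_of_gt n hj
  · apply Polynomial.le_natDegree_of_ne_zero
    rw [Re_coeff_top]
    norm_num

/-- `Re n` in the `Astar` shape. -/
lemma Re_eq_astar (n : ℕ) (hn : 1 ≤ n) :
    Re n = 1 + Polynomial.X * ∑ k ∈ Finset.Icc 1 n,
      (n.choose k : Polynomial ℤ) * (1 + Polynomial.X)^k * eulerPoly (Polynomial ℤ) k Polynomial.X := by
  have hsplit : Me n = 1 + ∑ k ∈ Finset.Icc 1 n, (n.choose k : Polynomial ℤ) * Ue k := by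
    rw [Me, Finset.range_eq_Ico, Finset.sum_eq_sum_Ico_succ_bot (by omega : 0 < n+1),
      Finset.Ico_add_one_right_eq_Icc]
    simp [Ue_zero]
  have hterm : ∀ k ∈ Finset.Icc 1 n, (n.choose k : Polynomial ℤ) * Ue k
      = (n.choose k : Polynomial ℤ) * (1 + Polynomial.X)^k * eulerPoly (Polynomial ℤ) k Polynomial.X := by
    intro k _
    rw [Ue]
    have : Ae k = eulerPoly (Polynomial ℤ) k Polynomial.X := rfl
    rw [← this]
    ring
  rw [key_identity, hsplit, ← Finset.sum_congr rfl hterm]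
  ring

set_option maxHeartbeats 1000000 in
/-- reflection: `Re n` is palindromic with center `n`. -/
lemma Re_reflect (n : ℕ) (hn : 1 ≤ n) : Polynomial.reflect (2*n) (Re n) = Re n := by
  conv_lhs => rw [Re_eq_astar n hn]
  have hre : Re n = Polynomial.X ^ (2*n) + ∑ k ∈ Finset.Icc 1 n,
      (n.choose k : Polynomial ℤ) * (Polynomial.X ^ (2*(n-k)) * Ue k) := by
    rw [Re, Finset.range_eq_Ico, Finset.sum_eq_sum_Ico_succ_bot (by omega : 0 < n+1),
      Finset.Ico_add_one_right_eq_Icc]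
    simp [Ue_zero]
  have hsum : 1 + Polynomial.X * ∑ k ∈ Finset.Icc 1 n,
      (n.choose k : Polynomial ℤ) * (1 + Polynomial.X)^k * eulerPoly (Polynomial ℤ) k Polynomial.X
      = 1 + ∑ k ∈ Finset.Icc 1 n, (n.choose k : Polynomial ℤ) * (Polynomial.X * Ue k) := by
    rw [Finset.mul_sum]
    congr 1
    apply Finset.sum_congr rfl
    intro k _
    rw [Ue]
    have : Ae k = eulerPoly (Polynomial ℤ) k Polynomial.X := rfl
    rw [← this]
    ring
  rw [hsum, Polynomial.reflect_add, reflect_sum]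
  have h1 : Polynomial.reflect (2*n) (1 : Polynomial ℤ) = Polynomial.X ^ (2*n) := by
    rw [show (1 : Polynomial ℤ) = Polynomial.X ^ 0 from (pow_zero _).symm,
      Polynomial.reflect_monomial, Polynomial.revAt_le (by omega : 0 ≤ 2*n),
      Nat.sub_zero]
  have h2 : ∀ k ∈ Finset.Icc 1 n, Polynomial.reflect (2*n)
      ((n.choose k : Polynomial ℤ) * (Polynomial.X * Ue k))
      = (n.choose k : Polynomial ℤ) * (Polynomial.X ^ (2*(n-k)) * Ue k) := by
    intro k hk
    simp only [Finset.mem_Icc] at hk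
    rw [← Polynomial.C_eq_natCast, Polynomial.reflect_C_mul]
    congr 1
    have hXdeg : (Polynomial.X : Polynomial ℤ).natDegree ≤ 2*(n-k)+1 := by
      rw [Polynomial.natDegree_X]; omega
    have hUdeg : (Ue k).natDegree ≤ 2*k-1 := Ue_natDegree k
    have hXr : Polynomial.reflect (2*(n-k)+1) (Polynomial.X : Polynomial ℤ)
        = Polynomial.X ^ (2*(n-k)) := by
      conv_lhs => rw [show (Polynomial.X : Polynomial ℤ) = Polynomial.X ^ 1 from (pow_one _).symm]
      rw [Polynomial.reflect_monomial, Polynomial.revAt_le (by omega : 1 ≤ 2*(n-k)+1),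
        show 2*(n-k)+1-1 = 2*(n-k) by omega]
    rw [show 2*n = (2*(n-k)+1) + (2*k-1) by omega,
      Polynomial.reflect_mul _ _ hXdeg hUdeg, Ue_reflect k (by omega), hXr]
  rw [Finset.sum_congr rfl h2, h1, ← hre]

end

end Stmt14

open Stmt14

/-- `A*_n(t)` is palindromic of degree 2n (center of symmetry n)
and unimodal, for every n ≥ 1. -/
theorem stmt14 (n : ℕ) (hn : 1 ≤ n) :
    (Astar (Polynomial ℤ) n Polynomial.X).natDegree = 2 * n ∧
    (∀ i ≤ 2 * n,
      (Astar (Polynomial ℤ) n Polynomial.X).coeff i =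
        (Astar (Polynomial ℤ) n Polynomial.X).coeff (2 * n - i)) ∧
    (∃ c : ℕ,
      (∀ i < c,
        (Astar (Polynomial ℤ) n Polynomial.X).coeff i ≤
          (Astar (Polynomial ℤ) n Polynomial.X).coeff (i + 1)) ∧
      (∀ i, c ≤ i →
        (Astar (Polynomial ℤ) n Polynomial.X).coeff (i + 1) ≤
          (Astar (Polynomial ℤ) n Polynomial.X).coeff i)) := by
  have hA : Astar (Polynomial ℤ) n Polynomial.X = Re n := by
    rw [Astar, Re_eq_astar n hn]
  have pal : ∀ i ≤ 2 * n, (Re n).coeff i = (Re n).coeff (2 * n - i) := by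
    intro i hi
    conv_lhs => rw [← Re_reflect n hn]
    rw [Polynomial.coeff_reflect, Polynomial.revAt_le hi]
  have mono1 : ∀ i < n, (Re n).coeff i ≤ (Re n).coeff (i + 1) := by
    intro i hi
    rw [Re_coeff, Re_coeff]
    apply Finset.sum_le_sum
    intro k hk
    simp only [Finset.mem_range] at hk
    apply mul_le_mul_of_nonneg_left _ (by positivity : (0:ℤ) ≤ (n.choose k : ℤ))
    by_cases h1 : 2*(n-k) ≤ i
    · rw [if_pos h1, if_pos (by omega)]
      rw [show i + 1 - 2*(n-k) = (i - 2*(n-k)) + 1 by omega]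
      exact Ue_mono k (i - 2*(n-k)) (by omega)
    · by_cases h2 : 2*(n-k) ≤ i + 1
      · rw [if_neg h1, if_pos h2]
        exact Ue_coeff_nonneg k _
      · rw [if_neg h1, if_neg h2]
  refine ⟨by rw [hA]; exact Re_natDegree n,
    fun i hi => by rw [hA]; exact pal i hi,
    n, fun i hi => by rw [hA]; exact mono1 i hi,
    fun i hi => ?_⟩
  rw [hA]
  by_cases hi2 : i + 1 ≤ 2 * n
  · have h1 := pal (i+1) hi2
    have h2 := pal i (by omega)
    rw [h1, h2]
    have h3 := mono1 (2*n - (i+1)) (by omega)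
    rw [show 2*n - (i+1) + 1 = 2*n - i by omega] at h3
    exact h3
  · rw [Re_coeff_zero_of_gt n (by omega)]
    exact Re_coeff_nonneg n i
end

section
/- The product of two palindromic and unimodal polynomials with nonnegative real coefficients is again palindromic and unimodal. -/
/-!
Extend the coefficient sequences `f`, `g` of `p`, `q` by zero to `ℤ`. Being nonnegative,
palindromic and unimodal, they are symmetric about `m/2`, `n/2` and decrease away from the centre.
For the coefficients `c_j = ∑ₐ f a * g (j - a)` of the product, summation by parts gives
`c_j - c_{j+1} = ∑ₐ (f a - f (a + 1)) * g (j - a)`, and pairing `a` with `m - 1 - a` turns this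
into a sum of terms `(f b - f (b + 1)) * (g (j - b) - g (j - m + 1 + b))` over `b ≥ (m - 1)/2`,
both of whose factors are nonnegative once `2j + 1 ≥ m + n`. Palindromicity of the product is
`reflect_mul`.
-/

open Finset

/-- A polynomial is palindromic with respect to `n` if `h_i = h_{n-i}` for all `i ≤ n`. -/
def Palindromic (p : Polynomial ℝ) (n : ℕ) : Prop :=
  p.natDegree ≤ n ∧ ∀ i ≤ n, p.coeff i = p.coeff (n - i)

/-- A polynomial is unimodal if its coefficients weakly increase then weakly decrease. -/
def Unimodal (p : Polynomial ℝ) : Prop :=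
  ∃ c : ℕ, (∀ i < c, p.coeff i ≤ p.coeff (i + 1)) ∧ ∀ i, c ≤ i → p.coeff (i + 1) ≤ p.coeff i

open Polynomial

theorem Finset.sum_nonneg_of_involution {ι M : Type*} [AddCommMonoid M] [LinearOrder M]
    [IsOrderedCancelAddMonoid M] {s : Finset ι} {F : ι → M} (σ : ι → ι)
    (hσ : ∀ a ∈ s, σ a ∈ s) (hσσ : ∀ a ∈ s, σ (σ a) = a) (h : ∀ a ∈ s, 0 ≤ F a + F (σ a)) :
    0 ≤ ∑ a ∈ s, F a := by
  have hsum : ∑ a ∈ s, F (σ a) = ∑ a ∈ s, F a :=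
    sum_nbij' σ σ hσ hσ hσσ hσσ fun _ _ => rfl
  have : 0 ≤ ∑ a ∈ s, F a + ∑ a ∈ s, F a := by
    simpa only [sum_add_distrib, hsum] using sum_nonneg h
  by_contra! hneg
  exact this.not_gt (add_neg hneg hneg)

structure IsSymmUnimodal (f : ℤ → ℝ) (m : ℤ) : Prop where
  symm : ∀ a, f (m - a) = f a
  /-- `s ≤ w` and `m ≤ s + w` say that `|s - m/2| ≤ w - m/2`. -/
  le_of_farther : ∀ ⦃s w⦄, s ≤ w → m ≤ s + w → f w ≤ f s

namespace IsSymmUnimodal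

variable {f g : ℤ → ℝ} {m n : ℤ}

theorem of_succ_le (hsymm : ∀ a, f (m - a) = f a)
    (hstep : ∀ a, m ≤ 2 * a + 1 → f (a + 1) ≤ f a) : IsSymmUnimodal f m := by
  have hanti : ∀ s, m ≤ 2 * s + 1 → ∀ w, s ≤ w → f w ≤ f s := by
    intro s hs w hsw
    induction w, hsw using Int.leInduction with
    | base => rfl
    | succ w hsw ih => exact (hstep w (by omega)).trans ih
  refine ⟨hsymm, fun s w hsw hsum => ?_⟩
  by_cases hs : m ≤ 2 * s + 1
  · exact hanti s hs w hsw
  · rw [← hsymm s]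
    exact hanti (m - s) (by omega) w (by omega)

theorem succ_le (hf : IsSymmUnimodal f m) {a : ℤ} (ha : m ≤ 2 * a + 1) : f (a + 1) ≤ f a :=
  hf.le_of_farther (by omega) (by omega)

theorem sum_mul_sub_eq (hf : IsSymmUnimodal f m) (hf_neg : ∀ a < 0, f a = 0) (j : ℤ) :
    ∑ a ∈ Icc 0 m, f a * g (j - a) - ∑ a ∈ Icc 0 m, f a * g (j + 1 - a) =
      ∑ a ∈ Icc (-1) m, (f a - f (a + 1)) * g (j - a) := by
  have hlow : ∑ a ∈ Icc 0 m, f a * g (j - a) = ∑ a ∈ Icc (-1) m, f a * g (j - a) := by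
    refine sum_subset (Icc_subset_Icc_left (by norm_num)) fun a ha ha' => ?_
    simp only [mem_Icc] at ha ha'
    rw [hf_neg a (by omega), zero_mul]
  have hhigh : ∑ a ∈ Icc 0 m, f a * g (j + 1 - a) = ∑ a ∈ Icc 0 (m + 1), f a * g (j + 1 - a) := by
    refine sum_subset (Icc_subset_Icc_right (by omega)) fun a ha ha' => ?_
    simp only [mem_Icc] at ha ha'
    rw [show a = m + 1 by omega, ← hf.symm, hf_neg _ (by omega), zero_mul]
  have hshift : ∑ a ∈ Icc 0 (m + 1), f a * g (j + 1 - a) =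
      ∑ a ∈ Icc (-1) m, f (a + 1) * g (j - a) := by
    rw [show Icc 0 (m + 1) = (Icc (-1) m).image (· + 1) by rw [image_add_right_Icc]; norm_num,
      sum_image fun _ _ _ _ => add_right_cancel]
    simp only [add_sub_add_right_eq_sub]
  simp only [sub_mul, sum_sub_distrib, hlow, hhigh, hshift]

theorem conv_succ_le (hf : IsSymmUnimodal f m) (hf_neg : ∀ a < 0, f a = 0)
    (hg : IsSymmUnimodal g n) {j : ℤ} (hj : m + n ≤ 2 * j + 1) :
    ∑ a ∈ Icc 0 m, f a * g (j + 1 - a) ≤ ∑ a ∈ Icc 0 m, f a * g (j - a) := by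
  set F : ℤ → ℝ := fun a => (f a - f (a + 1)) * g (j - a)
  -- The terms at `a` and `m - 1 - a` share the increment of `f`, up to sign, by symmetry.
  have hpair : ∀ b, m - 1 ≤ 2 * b → 0 ≤ F (m - 1 - b) + F b := by
    intro b hb
    have hF : F (m - 1 - b) + F b = (f b - f (b + 1)) * (g (j - b) - g (j - (m - 1 - b))) := by
      simp only [F, show m - 1 - b = m - (b + 1) by ring, show m - (b + 1) + 1 = m - b by ring,
        hf.symm]
      ring
    rw [hF]
    refine mul_nonneg (sub_nonneg.2 (hf.succ_le (by omega))) (sub_nonneg.2 ?_)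
    exact hg.le_of_farther (by omega) (by omega)
  have hsum : 0 ≤ ∑ a ∈ Icc (-1) m, F a := by
    refine sum_nonneg_of_involution (fun a => m - 1 - a) (fun a ha => ?_) (fun a _ => by ring)
      fun a _ => ?_
    · simp only [mem_Icc] at ha ⊢; omega
    · rcases le_total (m - 1) (2 * a) with ha | ha
      · rw [add_comm]; exact hpair a ha
      · simpa using hpair (m - 1 - a) (by omega)
  linarith [hf.sum_mul_sub_eq hf_neg (g := g) j]

end IsSymmUnimodal

section Palindromic

variable {p q : ℝ[X]} {m n : ℕ}

theorem palindromic_iff_reflect : Palindromic p m ↔ p.natDegree ≤ m ∧ p.reflect m = p := by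
  refine and_congr_right fun _ => ⟨fun h => ext fun i => ?_, fun h i hi => ?_⟩
  · rcases le_or_gt i m with hi | hi
    · rw [coeff_reflect, revAt_le hi, h i hi]
    · rw [coeff_reflect, revAt_eq_self_of_lt hi]
  · rw [← h, coeff_reflect, revAt_le hi, h]

theorem Palindromic.mul (hp : Palindromic p m) (hq : Palindromic q n) :
    Palindromic (p * q) (m + n) := by
  rw [palindromic_iff_reflect] at hp hq ⊢
  exact ⟨natDegree_mul_le.trans (add_le_add hp.1 hq.1),
    by rw [reflect_mul _ _ hp.1 hq.1, hp.2, hq.2]⟩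

theorem Palindromic.coeff_succ_le (hp : Palindromic p m) (hp0 : ∀ i, 0 ≤ p.coeff i)
    (hpu : Unimodal p) {i : ℕ} (hi : m ≤ 2 * i + 1) : p.coeff (i + 1) ≤ p.coeff i := by
  obtain ⟨c, hinc, hdec⟩ := hpu
  rcases le_or_gt c i with hci | hic
  · exact hdec i hci
  rcases le_or_gt m i with hmi | him
  · rw [coeff_eq_zero_of_natDegree_lt (hp.1.trans_lt (by omega))]
    exact hp0 i
  · rw [hp.2 i him.le, hp.2 (i + 1) (by omega), show m - i = m - (i + 1) + 1 by omega]
    exact hinc _ (by omega)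

theorem Palindromic.unimodal_of_coeff_succ_le (hp : Palindromic p m)
    (hstep : ∀ i, m ≤ 2 * i + 1 → p.coeff (i + 1) ≤ p.coeff i) : Unimodal p := by
  refine ⟨(m + 1) / 2, fun i hi => ?_, fun i hi => hstep i (by omega)⟩
  rw [hp.2 i (by omega), hp.2 (i + 1) (by omega), show m - i = m - (i + 1) + 1 by omega]
  exact hstep _ (by omega)

end Palindromic

namespace Polynomial

variable {p q : ℝ[X]} {m : ℕ}

noncomputable def intCoeff (p : ℝ[X]) (a : ℤ) : ℝ :=
  if 0 ≤ a then p.coeff a.toNat else 0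

@[simp]
theorem intCoeff_natCast (p : ℝ[X]) (k : ℕ) : p.intCoeff k = p.coeff k := by
  simp [intCoeff]

theorem intCoeff_of_neg (p : ℝ[X]) {a : ℤ} (ha : a < 0) : p.intCoeff a = 0 := by
  simp [intCoeff, not_le.2 ha]

theorem intCoeff_of_natDegree_lt {a : ℤ} (ha : (p.natDegree : ℤ) < a) : p.intCoeff a = 0 := by
  rw [intCoeff, if_pos (by omega), coeff_eq_zero_of_natDegree_lt (by omega)]

theorem coeff_mul_eq_sum_intCoeff (hp : p.natDegree ≤ m) (j : ℕ) :
    (p * q).coeff j = ∑ a ∈ Icc (0 : ℤ) m, p.intCoeff a * q.intCoeff (j - a) := by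
  have hterm (k : ℕ) : (monomial k (p.coeff k) * q).coeff j = p.coeff k * q.intCoeff (j - k) := by
    rw [← C_mul_X_pow_eq_monomial, mul_assoc, coeff_C_mul, coeff_X_pow_mul']
    split_ifs with hk
    · rw [← Nat.cast_sub hk, intCoeff_natCast]
    · rw [intCoeff_of_neg q (by omega)]
  conv_lhs => rw [p.as_sum_range' (m + 1) (by omega), Finset.sum_mul, finsetSum_coeff]
  simp [Int.Icc_eq_finset_map, hterm]

end Polynomial

section Palindromic

variable {p q : ℝ[X]} {m n : ℕ}

theorem Palindromic.intCoeff_sub (hp : Palindromic p m) (a : ℤ) :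
    p.intCoeff (m - a) = p.intCoeff a := by
  have hdeg : (p.natDegree : ℤ) ≤ m := by exact_mod_cast hp.1
  rcases lt_or_ge a 0 with ha | ha
  · rw [intCoeff_of_neg p ha, intCoeff_of_natDegree_lt (by omega)]
  rcases le_or_gt a m with ham | ham
  · lift a to ℕ using ha
    rw [← Nat.cast_sub (by omega), intCoeff_natCast, intCoeff_natCast, hp.2 a (by omega)]
  · rw [intCoeff_of_neg p (by omega), intCoeff_of_natDegree_lt (by omega)]

theorem Palindromic.isSymmUnimodal (hp : Palindromic p m) (hp0 : ∀ i, 0 ≤ p.coeff i)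
    (hpu : Unimodal p) : IsSymmUnimodal p.intCoeff m := by
  refine .of_succ_le hp.intCoeff_sub fun a ha => ?_
  lift a to ℕ using (by omega)
  exact_mod_cast hp.coeff_succ_le hp0 hpu (by omega)

theorem Palindromic.coeff_mul_succ_le (hp : Palindromic p m) (hq : Palindromic q n)
    (hp0 : ∀ i, 0 ≤ p.coeff i) (hq0 : ∀ i, 0 ≤ q.coeff i) (hpu : Unimodal p) (hqu : Unimodal q)
    {i : ℕ} (hi : m + n ≤ 2 * i + 1) : (p * q).coeff (i + 1) ≤ (p * q).coeff i := by
  rw [coeff_mul_eq_sum_intCoeff hp.1, coeff_mul_eq_sum_intCoeff hp.1, Nat.cast_succ]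
  exact (hp.isSymmUnimodal hp0 hpu).conv_succ_le (fun _ => p.intCoeff_of_neg)
    (hq.isSymmUnimodal hq0 hqu) (by omega)

end Palindromic

/-- the product of two palindromic and unimodal polynomials with
nonnegative real coefficients is again palindromic and unimodal. -/
theorem stmt15 (p q : Polynomial ℝ) (m n : ℕ)
    (hp0 : ∀ i, 0 ≤ p.coeff i) (hq0 : ∀ i, 0 ≤ q.coeff i)
    (hp : Palindromic p m) (hq : Palindromic q n)
    (hpu : Unimodal p) (hqu : Unimodal q) :
    Palindromic (p * q) (m + n) ∧ Unimodal (p * q) := by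
  have hpq := hp.mul hq
  exact ⟨hpq, hpq.unimodal_of_coeff_succ_le fun _ hi =>
    hp.coeff_mul_succ_le hq hp0 hq0 hpu hqu hi⟩
end

section
/- For n ≥ 1 and 1 ≤ k ≤ n-1, the generating polynomial ∑ t^{des(π)} q^{ai(π)} over permutations π ∈ PRW_{n+1} with π_{n+1-k} = n+1 equals t · [n-1 choose k]_q · q^k · A_k(t,q) · B̃_{n-1-k}(t,q), where A_k(t,q) = ∑_{σ ∈ S_k} t^{des(σ)} q^{ai(σ)} and B̃_m(t,q) = ∑_{π ∈ PRW_{m+1}} t^{des(π)} q^{ai(π)}. -/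
open Finset

/-- weight statistic for subsets -/
def vS (M : ℕ) (S : Finset ℕ) : ℕ :=
  (((range M) ×ˢ (range M)).filter (fun p => p.1 ∈ S ∧ p.2 ∉ S ∧ p.1 < p.2)).card

lemma vS_empty (M : ℕ) : vS M ∅ = 0 := by
  unfold vS
  rw [Finset.card_eq_zero, Finset.filter_eq_empty_iff]
  intro p _
  simp

lemma vS_step (M K : ℕ) (S : Finset ℕ) (hsub : S ⊆ range M) (hcard : S.card = K) :
    vS (M + 1) S = vS M S + K := by
  unfold vS
  have he : ((range (M+1)) ×ˢ (range (M+1))).filter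
      (fun p => p.1 ∈ S ∧ p.2 ∉ S ∧ p.1 < p.2) =
      ((range M) ×ˢ (range M)).filter (fun p => p.1 ∈ S ∧ p.2 ∉ S ∧ p.1 < p.2)
        ∪ S.image (fun a => (a, M)) := by
    ext p
    simp only [mem_filter, mem_product, mem_range, mem_union, mem_image]
    constructor
    · rintro ⟨⟨h1, h2⟩, hp1, hp2, hlt⟩
      by_cases hM : p.2 = M
      · exact Or.inr ⟨p.1, hp1, by rw [← hM]⟩
      · exact Or.inl ⟨⟨by omega, by omega⟩, hp1, hp2, hlt⟩
    · rintro (⟨⟨h1, h2⟩, hp1, hp2, hlt⟩ | ⟨a, ha, rfl⟩)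
      · exact ⟨⟨by omega, by omega⟩, hp1, hp2, hlt⟩
      · have := mem_range.mp (hsub ha)
        exact ⟨⟨by omega, by omega⟩, ha, fun h => by have := mem_range.mp (hsub h); omega,
          by omega⟩
  rw [he, card_union_of_disjoint, card_image_of_injective _ (fun a b h => by
    simpa using congrArg Prod.fst h), hcard]
  · rw [Finset.disjoint_left]
    rintro p hp hq
    simp only [mem_filter, mem_product, mem_range] at hp
    simp only [mem_image] at hq
    obtain ⟨a, _, rfl⟩ := hq
    omega

lemma vS_insert (M : ℕ) (S : Finset ℕ) (hsub : S ⊆ range M) :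
    vS (M + 1) (insert M S) = vS M S := by
  unfold vS
  congr 1
  ext p
  simp only [mem_filter, mem_product, mem_range, mem_insert]
  constructor
  · rintro ⟨⟨h1, h2⟩, hp1 | hp1, hp2, hlt⟩
    · omega
    · have hb := mem_range.mp (hsub hp1)
      exact ⟨⟨by omega, by omega⟩, hp1, fun h => hp2 (Or.inr h), hlt⟩
  · rintro ⟨⟨h1, h2⟩, hp1, hp2, hlt⟩
    refine ⟨⟨by omega, by omega⟩, Or.inr hp1, ?_, hlt⟩
    rintro (h | h)
    · omega
    · exact hp2 h

lemma gauss_eq {R : Type*} [CommRing R] (q : R) (M K : ℕ) :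
    gaussR q M K = ∑ S ∈ powersetCard K (range M), q ^ vS M S := by
  induction M generalizing K with
  | zero =>
    cases K with
    | zero => simp [gaussR, vS_empty]
    | succ k =>
      rw [show gaussR q 0 (k+1) = 0 from rfl]
      rw [show (range 0 : Finset ℕ) = ∅ from rfl]
      rw [Finset.powersetCard_eq_empty.mpr (by simp)]
      simp
  | succ M ih =>
    cases K with
    | zero => simp [gaussR, vS_empty]
    | succ K =>
      have hM : M ∉ range M := by simp
      rw [show range (M+1) = insert M (range M) from range_add_one,
        Finset.powersetCard_succ_insert hM, sum_union]
      · have h1 : ∑ S ∈ powersetCard (K+1) (range M), q ^ vS (M+1) S =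
            q ^ (K+1) * ∑ S ∈ powersetCard (K+1) (range M), q ^ vS M S := by
          rw [mul_sum]
          refine sum_congr rfl fun S hS => ?_
          rw [mem_powersetCard] at hS
          rw [vS_step M (K+1) S hS.1 hS.2, pow_add, mul_comm]
        have h2 : ∑ S ∈ (powersetCard K (range M)).image (insert M),
            q ^ vS (M+1) S = ∑ S ∈ powersetCard K (range M), q ^ vS M S := by
          rw [sum_image]
          · refine sum_congr rfl fun S hS => ?_
            rw [mem_powersetCard] at hS
            rw [vS_insert M S hS.1]
          · intro a ha b hb hab
            rw [mem_coe, mem_powersetCard] at ha hb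
            have ha' : M ∉ a := fun h => by simpa using ha.1 h
            have hb' : M ∉ b := fun h => by simpa using hb.1 h
            rw [← Finset.erase_insert ha', ← Finset.erase_insert hb', hab]
        rw [h1, h2, show gaussR q (M+1) (K+1) = gaussR q M K + q ^ (K+1) * gaussR q M (K+1) from rfl, ih K, ih (K+1)]
        ring
      · rw [Finset.disjoint_left]
        intro S hS hS'
        rw [mem_powersetCard] at hS
        simp only [mem_image] at hS'
        obtain ⟨a, ha, rfl⟩ := hS'
        exact hM (hS.1 (mem_insert_self M a))

/-- `i`-th smallest element of a finset of naturals (0 fallback). -/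
def emb (s : Finset ℕ) (i : ℕ) : ℕ := (s.sort (· ≤ ·)).getD i 0

lemma emb_mem {s : Finset ℕ} {i : ℕ} (h : i < s.card) : emb s i ∈ s := by
  unfold emb
  rw [List.getD_eq_getElem?_getD, getElem?_pos _ _ (by rwa [Finset.length_sort]), Option.getD_some]
  exact (Finset.mem_sort _).mp (List.getElem_mem _)

lemma emb_lt_emb {s : Finset ℕ} {i j : ℕ} (hij : i < j) (hj : j < s.card) :
    emb s i < emb s j := by
  unfold emb
  have hi : i < (s.sort (· ≤ ·)).length := by rw [Finset.length_sort]; omega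
  have hj' : j < (s.sort (· ≤ ·)).length := by rwa [Finset.length_sort]
  simp only [List.getD_eq_getElem?_getD, getElem?_pos (s.sort (· ≤ ·)) i hi, getElem?_pos (s.sort (· ≤ ·)) j hj', Option.getD_some]
  exact s.sortedLT_sort.getElem_lt_getElem_of_lt hij

lemma emb_lt_iff {s : Finset ℕ} {i j : ℕ} (hi : i < s.card) (hj : j < s.card) :
    emb s i < emb s j ↔ i < j := by
  constructor
  · intro h
    by_contra hc
    rcases Nat.lt_or_ge j i with h' | h'
    · exact absurd (emb_lt_emb h' hi) (by omega)
    · have hij : i = j := by omega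
      subst hij; omega
  · intro h; exact emb_lt_emb h hj

lemma emb_inj {s : Finset ℕ} {i j : ℕ} (hi : i < s.card) (hj : j < s.card)
    (h : emb s i = emb s j) : i = j := by
  by_contra hc
  rcases Nat.lt_or_ge i j with h' | h'
  · exact absurd (emb_lt_emb h' hj) (by omega)
  · have : j < i := by omega
    exact absurd (emb_lt_emb this hi) (by omega)

lemma emb_surj {s : Finset ℕ} {x : ℕ} (hx : x ∈ s) : ∃ i < s.card, emb s i = x := by
  have : x ∈ s.sort (· ≤ ·) := (Finset.mem_sort _).mpr hx
  obtain ⟨n, hn⟩ := List.mem_iff_get.mp this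
  have hn' : (n : ℕ) < s.card := by
    have h2 := n.isLt
    simpa [Finset.length_sort] using h2
  refine ⟨n, hn', ?_⟩
  unfold emb
  rw [List.getD_eq_getElem?_getD, getElem?_pos (s.sort (· ≤ ·)) (n : ℕ) n.isLt, Option.getD_some]
  exact hn

lemma emb_bound {s : Finset ℕ} {B i : ℕ} (hs : s ⊆ range B) (hB : 0 < B) :
    emb s i < B := by
  by_cases h : i < s.card
  · exact mem_range.mp (hs (emb_mem h))
  · unfold emb
    rw [List.getD_eq_default]
    · exact hB
    · rw [Finset.length_sort]; omega

/-- tail letters -/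
def TT (S : Finset ℕ) : Finset ℕ := S.image (· + 1)
/-- head letters -/
def CC (m l : ℕ) (S : Finset ℕ) : Finset ℕ := (range (m + l + 2)) \ TT S

lemma mem_TT {S : Finset ℕ} {x : ℕ} : x ∈ TT S ↔ ∃ a ∈ S, a + 1 = x := by
  simp [TT]

lemma TT_card {S : Finset ℕ} : (TT S).card = S.card :=
  Finset.card_image_of_injective _ (fun a b h => by omega)

lemma TT_sub {m l : ℕ} {S : Finset ℕ} (hSr : S ⊆ range (m + l + 1)) :
    TT S ⊆ range (m + l + 2) := by
  intro x hx
  obtain ⟨a, ha, rfl⟩ := mem_TT.mp hx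
  have := mem_range.mp (hSr ha)
  exact mem_range.mpr (by omega)

lemma CC_sub {m l : ℕ} {S : Finset ℕ} : CC m l S ⊆ range (m + l + 2) :=
  Finset.sdiff_subset

lemma CC_card {m l : ℕ} {S : Finset ℕ} (hSr : S ⊆ range (m + l + 1))
    (hSc : S.card = l + 1) : (CC m l S).card = m + 1 := by
  unfold CC
  rw [Finset.card_sdiff_of_subset (TT_sub hSr), Finset.card_range, TT_card, hSc]
  omega

lemma zero_mem_CC {m l : ℕ} {S : Finset ℕ} : 0 ∈ CC m l S := by
  unfold CC
  rw [mem_sdiff, mem_range]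
  refine ⟨by omega, fun h => ?_⟩
  obtain ⟨a, _, ha⟩ := mem_TT.mp h
  omega

lemma not_mem_CC_of_mem_TT {m l : ℕ} {S : Finset ℕ} {x : ℕ} (hx : x ∈ TT S) :
    x ∉ CC m l S := by
  unfold CC
  rw [mem_sdiff]
  tauto

/-- the function underlying Φ -/
def phiF (m l : ℕ) (S : Finset ℕ) (hSr : S ⊆ range (m + l + 1))
    (α : Equiv.Perm (Fin (m + 1))) (β : Equiv.Perm (Fin (l + 1))) :
    Fin (m + 1 + (l + 1) + 1) → Fin (m + 1 + (l + 1) + 1) := fun i =>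
  if h1 : (i : ℕ) < m + 1 then
    ⟨emb (CC m l S) (α ⟨i, h1⟩), by
      have := emb_bound (s := CC m l S) (B := m + l + 2) (i := ((α ⟨i, h1⟩ : Fin (m+1)) : ℕ)) CC_sub (by omega)
      omega⟩
  else if h2 : (i : ℕ) = m + 1 then ⟨m + l + 2, by omega⟩
  else
    ⟨emb (TT S) (β ⟨(i : ℕ) - (m + 2), by have := i.isLt; omega⟩), by
      have := emb_bound (B := m + l + 2)
        (i := ((β ⟨(i : ℕ) - (m + 2), by have := i.isLt; omega⟩ : Fin (l+1)) : ℕ))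
        (TT_sub hSr) (by omega)
      omega⟩

lemma phiF_injective (m l : ℕ) (S : Finset ℕ) (hSr : S ⊆ range (m + l + 1))
    (hSc : S.card = l + 1) (α : Equiv.Perm (Fin (m + 1))) (β : Equiv.Perm (Fin (l + 1))) :
    Function.Injective (phiF m l S hSr α β) := by
  have hC : (CC m l S).card = m + 1 := CC_card hSr hSc
  have hT : (TT S).card = l + 1 := by rw [TT_card, hSc]
  have hbC : ∀ x : Fin (m+1), (x : ℕ) < (CC m l S).card := fun x => by rw [hC]; exact x.isLt
  have hbT : ∀ x : Fin (l+1), (x : ℕ) < (TT S).card := fun x => by rw [hT]; exact x.isLt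
  intro i j hij
  have hval := congrArg Fin.val hij
  unfold phiF at hval
  have hi := i.isLt
  have hj := j.isLt
  -- case analysis
  by_cases h1i : (i : ℕ) < m + 1 <;> by_cases h1j : (j : ℕ) < m + 1
  · rw [dif_pos h1i, dif_pos h1j] at hval
    have h2 : ((α ⟨i, h1i⟩ : Fin (m+1)) : ℕ) = ((α ⟨j, h1j⟩ : Fin (m+1)) : ℕ) :=
      emb_inj (hbC _) (hbC _) hval
    have h3 : α ⟨i, h1i⟩ = α ⟨j, h1j⟩ := Fin.ext h2
    have h4 := α.injective h3
    exact Fin.ext (by simpa using congrArg Fin.val h4)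
  · rw [dif_pos h1i, dif_neg h1j] at hval
    exfalso
    have hmem : emb (CC m l S) ((α ⟨i, h1i⟩ : Fin (m+1)) : ℕ) ∈ CC m l S :=
      emb_mem (hbC _)
    by_cases h2j : (j : ℕ) = m + 1
    · rw [dif_pos h2j] at hval
      simp only at hval
      have hlt := mem_range.mp (CC_sub hmem)
      omega
    · rw [dif_neg h2j] at hval
      simp only at hval
      have hmem2 : emb (TT S) ((β ⟨(j : ℕ) - (m + 2), by omega⟩ : Fin (l+1)) : ℕ) ∈ TT S :=
        emb_mem (hbT _)
      rw [hval] at hmem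
      exact not_mem_CC_of_mem_TT hmem2 hmem
  · rw [dif_neg h1i, dif_pos h1j] at hval
    exfalso
    have hmem : emb (CC m l S) ((α ⟨j, h1j⟩ : Fin (m+1)) : ℕ) ∈ CC m l S :=
      emb_mem (hbC _)
    by_cases h2i : (i : ℕ) = m + 1
    · rw [dif_pos h2i] at hval
      simp only at hval
      rw [← hval] at hmem
      have := mem_range.mp (CC_sub hmem)
      omega
    · rw [dif_neg h2i] at hval
      simp only at hval
      have hmem2 : emb (TT S) ((β ⟨(i : ℕ) - (m + 2), by omega⟩ : Fin (l+1)) : ℕ) ∈ TT S :=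
        emb_mem (hbT _)
      rw [← hval] at hmem
      exact not_mem_CC_of_mem_TT hmem2 hmem
  · by_cases h2i : (i : ℕ) = m + 1 <;> by_cases h2j : (j : ℕ) = m + 1
    · exact Fin.ext (by omega)
    · exfalso
      rw [dif_neg h1i, dif_pos h2i, dif_neg h1j, dif_neg h2j] at hval
      simp only at hval
      have hmem2 : emb (TT S) ((β ⟨(j : ℕ) - (m + 2), by omega⟩ : Fin (l+1)) : ℕ) ∈ TT S :=
        emb_mem (hbT _)
      rw [← hval] at hmem2
      have := mem_range.mp (TT_sub hSr hmem2)
      omega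
    · exfalso
      rw [dif_neg h1i, dif_neg h2i, dif_neg h1j, dif_pos h2j] at hval
      simp only at hval
      have hmem2 : emb (TT S) ((β ⟨(i : ℕ) - (m + 2), by omega⟩ : Fin (l+1)) : ℕ) ∈ TT S :=
        emb_mem (hbT _)
      rw [hval] at hmem2
      have := mem_range.mp (TT_sub hSr hmem2)
      omega
    · rw [dif_neg h1i, dif_neg h2i, dif_neg h1j, dif_neg h2j] at hval
      simp only at hval
      have h2 : ((β ⟨(i : ℕ) - (m+2), by omega⟩ : Fin (l+1)) : ℕ) =
          ((β ⟨(j : ℕ) - (m+2), by omega⟩ : Fin (l+1)) : ℕ) :=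
        emb_inj (hbT _) (hbT _) hval
      have h4 := β.injective (Fin.ext h2)
      have h5 := congrArg Fin.val h4
      simp only at h5
      exact Fin.ext (by omega)

/-- Φ as a permutation -/
noncomputable def phiP (m l : ℕ) (S : Finset ℕ) (hSr : S ⊆ range (m + l + 1)) (hSc : S.card = l + 1)
    (α : Equiv.Perm (Fin (m + 1))) (β : Equiv.Perm (Fin (l + 1))) :
    Equiv.Perm (Fin (m + 1 + (l + 1) + 1)) :=
  Equiv.ofBijective _ (Finite.injective_iff_bijective.mp (phiF_injective m l S hSr hSc α β))

section Eval

variable (m l : ℕ) (S : Finset ℕ) (hSr : S ⊆ range (m + l + 1)) (hSc : S.card = l + 1)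
  (α : Equiv.Perm (Fin (m + 1))) (β : Equiv.Perm (Fin (l + 1)))

lemma pf_phi_head {j : ℕ} (hj : j < m + 1) :
    pf (phiP m l S hSr hSc α β) j = emb (CC m l S) (α ⟨j, hj⟩) := by
  have hjN : j < m + 1 + (l + 1) + 1 := by omega
  unfold pf
  rw [dif_pos hjN]
  show ((phiF m l S hSr α β ⟨j, hjN⟩ : Fin _) : ℕ) = _
  unfold phiF
  rw [dif_pos (show ((⟨j, hjN⟩ : Fin (m+1+(l+1)+1)) : ℕ) < m + 1 from hj)]

lemma pf_phi_mid : pf (phiP m l S hSr hSc α β) (m + 1) = m + l + 2 := by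
  have hjN : m + 1 < m + 1 + (l + 1) + 1 := by omega
  unfold pf
  rw [dif_pos hjN]
  show ((phiF m l S hSr α β ⟨m + 1, hjN⟩ : Fin _) : ℕ) = _
  unfold phiF
  rw [dif_neg (by simp), dif_pos rfl]

lemma pf_phi_tail {i : ℕ} (h1 : m + 2 ≤ i) (h2 : i < m + 1 + (l + 1) + 1) :
    pf (phiP m l S hSr hSc α β) i = emb (TT S) (β ⟨i - (m + 2), by omega⟩) := by
  unfold pf
  rw [dif_pos h2]
  show ((phiF m l S hSr α β ⟨i, h2⟩ : Fin _) : ℕ) = _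
  unfold phiF
  rw [dif_neg (by simp only; omega), dif_neg (by simp only; omega)]

lemma pf_phi_head_mem {j : ℕ} (hj : j < m + 1) :
    pf (phiP m l S hSr hSc α β) j ∈ CC m l S := by
  rw [pf_phi_head m l S hSr hSc α β hj]
  exact emb_mem (by rw [CC_card hSr hSc]; exact (α _).isLt)

lemma pf_phi_tail_mem {i : ℕ} (h1 : m + 2 ≤ i) (h2 : i < m + 1 + (l + 1) + 1) :
    pf (phiP m l S hSr hSc α β) i ∈ TT S := by
  rw [pf_phi_tail m l S hSr hSc α β h1 h2]
  exact emb_mem (by rw [TT_card, hSc]; exact (β _).isLt)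

lemma pf_phi_head_lt {j : ℕ} (hj : j < m + 1) :
    pf (phiP m l S hSr hSc α β) j < m + l + 2 :=
  mem_range.mp (CC_sub (pf_phi_head_mem m l S hSr hSc α β hj))

lemma pf_phi_tail_lt {i : ℕ} (h1 : m + 2 ≤ i) (h2 : i < m + 1 + (l + 1) + 1) :
    pf (phiP m l S hSr hSc α β) i < m + l + 2 :=
  mem_range.mp (TT_sub hSr (pf_phi_tail_mem m l S hSr hSc α β h1 h2))

lemma pf_phi_tail_pos {i : ℕ} (h1 : m + 2 ≤ i) (h2 : i < m + 1 + (l + 1) + 1) :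
    1 ≤ pf (phiP m l S hSr hSc α β) i := by
  have := pf_phi_tail_mem m l S hSr hSc α β h1 h2
  obtain ⟨a, _, ha⟩ := mem_TT.mp this
  omega

lemma pf_head_pf (j : ℕ) (hj : j < m + 1) : pf α j = ((α ⟨j, hj⟩ : Fin (m+1)) : ℕ) := by
  unfold pf; rw [dif_pos hj]

lemma pf_tail_pf (j : ℕ) (hj : j < l + 1) : pf β j = ((β ⟨j, hj⟩ : Fin (l+1)) : ℕ) := by
  unfold pf; rw [dif_pos hj]

lemma pf_phi_head_lt_iff {i j : ℕ} (hi : i < m + 1) (hj : j < m + 1) :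
    pf (phiP m l S hSr hSc α β) i < pf (phiP m l S hSr hSc α β) j ↔ pf α i < pf α j := by
  rw [pf_phi_head m l S hSr hSc α β hi, pf_phi_head m l S hSr hSc α β hj,
    pf_head_pf m α i hi, pf_head_pf m α j hj]
  exact emb_lt_iff (by rw [CC_card hSr hSc]; exact (α _).isLt)
    (by rw [CC_card hSr hSc]; exact (α _).isLt)

lemma pf_phi_tail_lt_iff {i j : ℕ} (hi1 : m + 2 ≤ i) (hi2 : i < m + 1 + (l + 1) + 1)
    (hj1 : m + 2 ≤ j) (hj2 : j < m + 1 + (l + 1) + 1) :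
    pf (phiP m l S hSr hSc α β) i < pf (phiP m l S hSr hSc α β) j ↔
      pf β (i - (m + 2)) < pf β (j - (m + 2)) := by
  rw [pf_phi_tail m l S hSr hSc α β hi1 hi2, pf_phi_tail m l S hSr hSc α β hj1 hj2,
    pf_tail_pf l β (i - (m+2)) (by omega), pf_tail_pf l β (j - (m+2)) (by omega)]
  exact emb_lt_iff (by rw [TT_card, hSc]; exact (β _).isLt)
    (by rw [TT_card, hSc]; exact (β _).isLt)

end Eval


lemma desN_phi (m l : ℕ) (S : Finset ℕ) (hSr : S ⊆ range (m + l + 1)) (hSc : S.card = l + 1)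
    (α : Equiv.Perm (Fin (m + 1))) (β : Equiv.Perm (Fin (l + 1))) :
    desN (phiP m l S hSr hSc α β) = desN α + desN β + 1 := by
  set π := phiP m l S hSr hSc α β with hπ
  have e1 : m + 1 + (l + 1) + 1 - 1 = m + l + 2 := by omega
  unfold desN
  rw [e1, show m + 1 - 1 = m from rfl, show l + 1 - 1 = l from rfl]
  have hsplit : filter (fun i => pf π (i + 1) < pf π i) (range (m + l + 2)) =
      ((filter (fun i => pf α (i + 1) < pf α i) (range m)) ∪ {m + 1})
      ∪ (filter (fun j => pf β (j + 1) < pf β j) (range l)).image (fun j => m + 2 + j) := by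
    ext i
    simp only [mem_union, mem_filter, mem_range, mem_image, mem_singleton]
    constructor
    · rintro ⟨hi, hd⟩
      rcases Nat.lt_or_ge i m with h | h
      · exact Or.inl (Or.inl ⟨h, (pf_phi_head_lt_iff m l S hSr hSc α β
          (by omega) (by omega)).mp hd⟩)
      · rcases Nat.eq_or_lt_of_le h with h' | h'
        · exfalso
          rw [hπ, show i = m from h'.symm, pf_phi_mid m l S hSr hSc α β] at hd
          have := pf_phi_head_lt m l S hSr hSc α β (show m < m + 1 by omega)
          omega
        · rcases Nat.eq_or_lt_of_le h' with h'' | h''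
          · exact Or.inl (Or.inr h''.symm)
          · refine Or.inr ⟨i - (m + 2), ⟨by omega, ?_⟩, by omega⟩
            have hiff := pf_phi_tail_lt_iff m l S hSr hSc α β
              (show m + 2 ≤ i + 1 by omega) (show i + 1 < m + 1 + (l+1) + 1 by omega)
              (show m + 2 ≤ i by omega) (show i < m + 1 + (l+1) + 1 by omega)
            rw [hπ] at hd
            rw [hiff, show i + 1 - (m + 2) = i - (m + 2) + 1 by omega] at hd
            exact hd
    · rintro ((⟨hi, hd⟩ | rfl) | ⟨j, ⟨hj, hd⟩, rfl⟩)
      · exact ⟨by omega, (pf_phi_head_lt_iff m l S hSr hSc α β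
          (by omega) (by omega)).mpr hd⟩
      · refine ⟨by omega, ?_⟩
        rw [hπ, pf_phi_mid m l S hSr hSc α β, pf_phi_tail m l S hSr hSc α β
          (by omega) (by omega)]
        have : emb (TT S) ((β ⟨m + 1 + 1 - (m + 2), by omega⟩ : Fin (l+1)) : ℕ) ∈ TT S :=
          emb_mem (by rw [TT_card, hSc]; exact (β _).isLt)
        have := mem_range.mp (TT_sub hSr this)
        omega
      · refine ⟨by omega, ?_⟩
        have hiff := pf_phi_tail_lt_iff m l S hSr hSc α β
          (show m + 2 ≤ m + 2 + j + 1 by omega) (show m + 2 + j + 1 < m + 1 + (l+1) + 1 by omega)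
          (show m + 2 ≤ m + 2 + j by omega) (show m + 2 + j < m + 1 + (l+1) + 1 by omega)
        rw [hπ, hiff, show m + 2 + j + 1 - (m + 2) = j + 1 by omega,
          show m + 2 + j - (m + 2) = j by omega]
        exact hd
  have hdisj1 : Disjoint (filter (fun i => pf α (i + 1) < pf α i) (range m)) ({m + 1} : Finset ℕ) := by
    rw [Finset.disjoint_left]
    intro x hx hx'
    simp only [mem_filter, mem_range] at hx
    simp only [mem_singleton] at hx'
    omega
  have hdisj2 : Disjoint ((filter (fun i => pf α (i + 1) < pf α i) (range m)) ∪ {m + 1})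
      ((filter (fun j => pf β (j + 1) < pf β j) (range l)).image (fun j => m + 2 + j)) := by
    rw [Finset.disjoint_left]
    intro x hx hx'
    simp only [mem_union, mem_filter, mem_range, mem_singleton] at hx
    simp only [mem_image] at hx'
    obtain ⟨j, _, rfl⟩ := hx'
    rcases hx with ⟨h, _⟩ | h <;> omega
  rw [hsplit, card_union_of_disjoint hdisj2, card_union_of_disjoint hdisj1, card_singleton,
    card_image_of_injective _ (fun a b h => by omega)]
  omega

lemma pf_val {n : ℕ} (π : Equiv.Perm (Fin n)) (x : Fin n) : pf π (x : ℕ) = π x := by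
  unfold pf; rw [dif_pos x.isLt]

lemma pf_inj {n : ℕ} (π : Equiv.Perm (Fin n)) {x y : ℕ} (hx : x < n) (hy : y < n)
    (h : pf π x = pf π y) : x = y := by
  unfold pf at h
  rw [dif_pos hx, dif_pos hy] at h
  have := π.injective (Fin.ext h)
  exact congrArg Fin.val this

lemma emb_zero_of_mem {s : Finset ℕ} (h : 0 ∈ s) : emb s 0 = 0 := by
  obtain ⟨i, hi, hemb⟩ := emb_surj h
  rcases Nat.eq_zero_or_pos i with rfl | hpos
  · exact hemb
  · have := emb_lt_emb hpos hi
    omega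

section AiBlocks

variable (m l : ℕ) (S : Finset ℕ) (hSr : S ⊆ range (m + l + 1)) (hSc : S.card = l + 1)
  (α : Equiv.Perm (Fin (m + 1))) (β : Equiv.Perm (Fin (l + 1)))

lemma ai_B1 :
    (((range (m+1+(l+1)+1)) ×ˢ (range (m+1+(l+1)+1))).filter (fun p =>
      (p.1 < p.2 ∧ pf (phiP m l S hSr hSc α β) p.2 < pf (phiP m l S hSr hSc α β) p.1 ∧
      ((0 < p.1 ∧ pf (phiP m l S hSr hSc α β) (p.1 - 1) < pf (phiP m l S hSr hSc α β) p.1) ∨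
        ∃ k < p.2, p.1 < k ∧ pf (phiP m l S hSr hSc α β) p.1 < pf (phiP m l S hSr hSc α β) k))
      ∧ p.2 < m + 1)).card = aiN α := by
  unfold aiN
  congr 1
  ext p
  simp only [mem_filter, mem_product, mem_range]
  constructor
  · rintro ⟨⟨h1, h2⟩, ⟨hlt, hinv, hadm⟩, hp2⟩
    have hp1 : p.1 < m + 1 := by omega
    refine ⟨⟨hp1, hp2⟩, hlt, (pf_phi_head_lt_iff m l S hSr hSc α β hp2 hp1).mp hinv, ?_⟩
    rcases hadm with ⟨hpos, hd⟩ | ⟨k, hk1, hk2, hk3⟩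
    · exact Or.inl ⟨hpos, (pf_phi_head_lt_iff m l S hSr hSc α β (by omega) hp1).mp hd⟩
    · exact Or.inr ⟨k, hk1, hk2,
        (pf_phi_head_lt_iff m l S hSr hSc α β hp1 (by omega)).mp hk3⟩
  · rintro ⟨⟨hp1, hp2⟩, hlt, hinv, hadm⟩
    refine ⟨⟨by omega, by omega⟩, ⟨hlt, (pf_phi_head_lt_iff m l S hSr hSc α β hp2 hp1).mpr hinv, ?_⟩, hp2⟩
    rcases hadm with ⟨hpos, hd⟩ | ⟨k, hk1, hk2, hk3⟩
    · exact Or.inl ⟨hpos, (pf_phi_head_lt_iff m l S hSr hSc α β (by omega) hp1).mpr hd⟩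
    · exact Or.inr ⟨k, hk1, hk2,
        (pf_phi_head_lt_iff m l S hSr hSc α β hp1 (by omega)).mpr hk3⟩

lemma ai_B4 :
    (((range (m+1+(l+1)+1)) ×ˢ (range (m+1+(l+1)+1))).filter (fun p =>
      (p.1 < p.2 ∧ pf (phiP m l S hSr hSc α β) p.2 < pf (phiP m l S hSr hSc α β) p.1 ∧
      ((0 < p.1 ∧ pf (phiP m l S hSr hSc α β) (p.1 - 1) < pf (phiP m l S hSr hSc α β) p.1) ∨
        ∃ k < p.2, p.1 < k ∧ pf (phiP m l S hSr hSc α β) p.1 < pf (phiP m l S hSr hSc α β) k))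
      ∧ p.1 = m + 1)).card = l + 1 := by
  have he : ((range (m+1+(l+1)+1)) ×ˢ (range (m+1+(l+1)+1))).filter (fun p =>
      (p.1 < p.2 ∧ pf (phiP m l S hSr hSc α β) p.2 < pf (phiP m l S hSr hSc α β) p.1 ∧
      ((0 < p.1 ∧ pf (phiP m l S hSr hSc α β) (p.1 - 1) < pf (phiP m l S hSr hSc α β) p.1) ∨
        ∃ k < p.2, p.1 < k ∧ pf (phiP m l S hSr hSc α β) p.1 < pf (phiP m l S hSr hSc α β) k))
      ∧ p.1 = m + 1) = ({m+1} : Finset ℕ) ×ˢ (Ico (m+2) (m+1+(l+1)+1)) := by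
    ext p
    simp only [mem_filter, mem_product, mem_range, mem_singleton, mem_Ico]
    constructor
    · rintro ⟨⟨h1, h2⟩, ⟨hlt, _, _⟩, hp1⟩
      exact ⟨hp1, by omega, h2⟩
    · rintro ⟨hp1, hp2, hp2'⟩
      have hmid := pf_phi_mid m l S hSr hSc α β
      have htl := pf_phi_tail_lt m l S hSr hSc α β hp2 hp2'
      have hhd := pf_phi_head_lt m l S hSr hSc α β (show m < m + 1 by omega)
      refine ⟨⟨by omega, by omega⟩, ⟨by omega, ?_, Or.inl ⟨by omega, ?_⟩⟩, hp1⟩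
      · rw [hp1, hmid]; omega
      · rw [hp1, show m + 1 - 1 = m from rfl, hmid]; omega
  rw [he, card_product, card_singleton, Nat.card_Ico]
  omega

lemma ai_B5 :
    (((range (m+1+(l+1)+1)) ×ˢ (range (m+1+(l+1)+1))).filter (fun p =>
      (p.1 < p.2 ∧ pf (phiP m l S hSr hSc α β) p.2 < pf (phiP m l S hSr hSc α β) p.1 ∧
      ((0 < p.1 ∧ pf (phiP m l S hSr hSc α β) (p.1 - 1) < pf (phiP m l S hSr hSc α β) p.1) ∨
        ∃ k < p.2, p.1 < k ∧ pf (phiP m l S hSr hSc α β) p.1 < pf (phiP m l S hSr hSc α β) k))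
      ∧ m + 2 ≤ p.1)).card = aiN β := by
  unfold aiN
  apply Finset.card_bij (fun p _ => (p.1 - (m+2), p.2 - (m+2)))
  · rintro p hp
    rw [mem_filter, mem_product, mem_range, mem_range] at hp
    obtain ⟨⟨h1, h2⟩, ⟨hlt, hinv, hadm⟩, hp1⟩ := hp
    rw [mem_filter, mem_product, mem_range, mem_range]
    have hq2 : m + 2 ≤ p.2 := by omega
    refine ⟨⟨by omega, by omega⟩, by omega, ?_, ?_⟩
    · exact (pf_phi_tail_lt_iff m l S hSr hSc α β hq2 h2 hp1 h1).mp hinv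
    · rcases hadm with ⟨hpos, hd⟩ | ⟨k, hk1, hk2, hk3⟩
      · rcases Nat.eq_or_lt_of_le hp1 with heq | hgt
        · exfalso
          rw [show p.1 - 1 = m + 1 by omega, pf_phi_mid m l S hSr hSc α β] at hd
          have := pf_phi_tail_lt m l S hSr hSc α β hp1 h1
          omega
        · refine Or.inl ⟨by omega, ?_⟩
          have := (pf_phi_tail_lt_iff m l S hSr hSc α β (show m + 2 ≤ p.1 - 1 by omega)
            (by omega) hp1 h1).mp hd
          rw [show p.1 - 1 - (m+2) = p.1 - (m+2) - 1 by omega] at this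
          exact this
      · refine Or.inr ⟨k - (m+2), by omega, by omega, ?_⟩
        exact (pf_phi_tail_lt_iff m l S hSr hSc α β hp1 h1 (by omega) (by omega)).mp hk3
  · rintro p hp p' hp' heq
    rw [mem_filter, mem_product, mem_range, mem_range] at hp hp'
    obtain ⟨⟨h1, h2⟩, ⟨hlt, _, _⟩, hp1⟩ := hp
    obtain ⟨⟨h1', h2'⟩, ⟨hlt', _, _⟩, hp1'⟩ := hp'
    have e1 := congrArg Prod.fst heq
    have e2 := congrArg Prod.snd heq
    simp only at e1 e2
    have : p.1 = p'.1 := by omega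
    have : p.2 = p'.2 := by omega
    exact Prod.ext (by omega) (by omega)
  · rintro r hr
    rw [mem_filter, mem_product, mem_range, mem_range] at hr
    obtain ⟨⟨h1, h2⟩, hlt, hinv, hadm⟩ := hr
    refine ⟨(r.1 + (m+2), r.2 + (m+2)), ?_, by simp⟩
    rw [mem_filter, mem_product, mem_range, mem_range]
    have k1 : m + 2 ≤ r.1 + (m+2) := by omega
    have k1' : r.1 + (m+2) < m+1+(l+1)+1 := by omega
    have k2 : m + 2 ≤ r.2 + (m+2) := by omega
    have k2' : r.2 + (m+2) < m+1+(l+1)+1 := by omega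
    refine ⟨⟨k1', k2'⟩, ⟨by omega, ?_, ?_⟩, by omega⟩
    · have := (pf_phi_tail_lt_iff m l S hSr hSc α β k2 k2' k1 k1')
      rw [Nat.add_sub_cancel, Nat.add_sub_cancel] at this
      exact this.mpr hinv
    · rcases hadm with ⟨hpos, hd⟩ | ⟨k, hk1, hk2, hk3⟩
      · refine Or.inl ⟨by omega, ?_⟩
        have := (pf_phi_tail_lt_iff m l S hSr hSc α β (show m+2 ≤ r.1 + (m+2) - 1 by omega)
          (by omega) k1 k1')
        rw [Nat.add_sub_cancel, show r.1 + (m+2) - 1 - (m+2) = r.1 - 1 by omega] at this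
        exact this.mpr hd
      · refine Or.inr ⟨k + (m+2), by omega, by omega, ?_⟩
        have := (pf_phi_tail_lt_iff m l S hSr hSc α β k1 k1'
          (show m+2 ≤ k + (m+2) by omega) (by omega))
        rw [Nat.add_sub_cancel, Nat.add_sub_cancel] at this
        exact this.mpr hk3

lemma ai_B3 :
    (((range (m+1+(l+1)+1)) ×ˢ (range (m+1+(l+1)+1))).filter (fun p =>
      (p.1 < p.2 ∧ pf (phiP m l S hSr hSc α β) p.2 < pf (phiP m l S hSr hSc α β) p.1 ∧
      ((0 < p.1 ∧ pf (phiP m l S hSr hSc α β) (p.1 - 1) < pf (phiP m l S hSr hSc α β) p.1) ∨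
        ∃ k < p.2, p.1 < k ∧ pf (phiP m l S hSr hSc α β) p.1 < pf (phiP m l S hSr hSc α β) k))
      ∧ (p.1 < m + 1 ∧ m + 2 ≤ p.2))).card = vS (m + l + 1) S := by
  set π := phiP m l S hSr hSc α β with hπ
  unfold vS
  apply Finset.card_bij (fun p _ => (pf π p.2 - 1, pf π p.1 - 1))
  · rintro p hp
    rw [mem_filter, mem_product, mem_range, mem_range] at hp
    obtain ⟨⟨h1, h2⟩, ⟨hlt, hinv, _⟩, hp1, hp2⟩ := hp
    have htm : pf π p.2 ∈ TT S := pf_phi_tail_mem m l S hSr hSc α β hp2 h2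
    have hcm : pf π p.1 ∈ CC m l S := pf_phi_head_mem m l S hSr hSc α β hp1
    obtain ⟨a, haS, ha⟩ := mem_TT.mp htm
    have haR := mem_range.mp (hSr haS)
    have hclt := mem_range.mp (CC_sub hcm)
    rw [mem_filter, mem_product, mem_range, mem_range]
    refine ⟨⟨by omega, by omega⟩, ?_, ?_, by omega⟩
    · rw [show pf π p.2 - 1 = a by omega]; exact haS
    · intro hmem
      have : pf π p.1 - 1 + 1 ∈ TT S := mem_TT.mpr ⟨_, hmem, rfl⟩
      rw [show pf π p.1 - 1 + 1 = pf π p.1 by omega] at this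
      exact not_mem_CC_of_mem_TT this hcm
  · rintro p hp p' hp' heq
    rw [mem_filter, mem_product, mem_range, mem_range] at hp hp'
    obtain ⟨⟨h1, h2⟩, ⟨hlt, hinv, _⟩, hp1, hp2⟩ := hp
    obtain ⟨⟨h1', h2'⟩, ⟨hlt', hinv', _⟩, hp1', hp2'⟩ := hp'
    have e1 := congrArg Prod.fst heq
    have e2 := congrArg Prod.snd heq
    simp only at e1 e2
    have ht1 : 1 ≤ pf π p.2 := pf_phi_tail_pos m l S hSr hSc α β hp2 h2
    have ht1' : 1 ≤ pf π p'.2 := pf_phi_tail_pos m l S hSr hSc α β hp2' h2'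
    have hv2 : pf π p.2 = pf π p'.2 := by omega
    have hv1 : pf π p.1 = pf π p'.1 := by omega
    exact Prod.ext (pf_inj π (by omega) (by omega) hv1) (pf_inj π (by omega) (by omega) hv2)
  · rintro r hr
    rw [mem_filter, mem_product, mem_range, mem_range] at hr
    obtain ⟨⟨h1, h2⟩, hrS, hrNS, hrlt⟩ := hr
    -- find tail position with value r.1 + 1
    have hT1 : r.1 + 1 ∈ TT S := mem_TT.mpr ⟨r.1, hrS, rfl⟩
    have hTcard : (TT S).card = l + 1 := by rw [TT_card, hSc]
    obtain ⟨i0, hi0, hemb0⟩ := emb_surj hT1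
    rw [hTcard] at hi0
    set j0 : Fin (l+1) := β.symm ⟨i0, hi0⟩ with hj0
    have hval2 : pf π (m + 2 + (j0 : ℕ)) = r.1 + 1 := by
      rw [hπ, pf_phi_tail m l S hSr hSc α β (by omega) (by have := j0.isLt; omega)]
      simp only [Nat.add_sub_cancel_left, Fin.eta]
      rw [hj0, Equiv.apply_symm_apply]
      exact hemb0
    -- find head position with value r.2 + 1
    have hC1 : r.2 + 1 ∈ CC m l S := by
      unfold CC
      rw [mem_sdiff, mem_range]
      refine ⟨by omega, fun hmem => ?_⟩
      obtain ⟨a, ha, ha'⟩ := mem_TT.mp hmem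
      have : a = r.2 := by omega
      subst this
      exact hrNS ha
    have hCcard : (CC m l S).card = m + 1 := CC_card hSr hSc
    obtain ⟨i1, hi1, hemb1⟩ := emb_surj hC1
    rw [hCcard] at hi1
    set p1 : Fin (m+1) := α.symm ⟨i1, hi1⟩ with hp1
    have hval1 : pf π (p1 : ℕ) = r.2 + 1 := by
      rw [hπ, pf_phi_head m l S hSr hSc α β p1.isLt]
      have : (⟨(p1 : ℕ), p1.isLt⟩ : Fin (m+1)) = p1 := rfl
      rw [this, hp1, Equiv.apply_symm_apply]
      exact hemb1
    refine ⟨((p1 : ℕ), m + 2 + (j0 : ℕ)), ?_, ?_⟩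
    · rw [mem_filter, mem_product, mem_range, mem_range]
      have hb1 := p1.isLt
      have hb2 := j0.isLt
      refine ⟨⟨by omega, by omega⟩, ⟨by omega, ?_, ?_⟩, by omega, by omega⟩
      · rw [hval1, hval2]; omega
      · refine Or.inr ⟨m + 1, by omega, by omega, ?_⟩
        rw [hval1, hπ, pf_phi_mid m l S hSr hSc α β]
        have := mem_range.mp (CC_sub hC1)
        omega
    · simp only
      rw [hval1, hval2]
      simp

lemma aiN_phi :
    aiN (phiP m l S hSr hSc α β) = aiN α + aiN β + (l + 1) + vS (m + l + 1) S := by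
  have hmid := pf_phi_mid m l S hSr hSc α β
  have hD2 : Disjoint (((range (m+1+(l+1)+1)) ×ˢ (range (m+1+(l+1)+1))).filter (fun p =>
      (p.1 < p.2 ∧ pf (phiP m l S hSr hSc α β) p.2 < pf (phiP m l S hSr hSc α β) p.1 ∧
      ((0 < p.1 ∧ pf (phiP m l S hSr hSc α β) (p.1 - 1) < pf (phiP m l S hSr hSc α β) p.1) ∨
        ∃ k < p.2, p.1 < k ∧ pf (phiP m l S hSr hSc α β) p.1 < pf (phiP m l S hSr hSc α β) k))
      ∧ p.2 < m + 1)) (((range (m+1+(l+1)+1)) ×ˢ (range (m+1+(l+1)+1))).filter (fun p =>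
      (p.1 < p.2 ∧ pf (phiP m l S hSr hSc α β) p.2 < pf (phiP m l S hSr hSc α β) p.1 ∧
      ((0 < p.1 ∧ pf (phiP m l S hSr hSc α β) (p.1 - 1) < pf (phiP m l S hSr hSc α β) p.1) ∨
        ∃ k < p.2, p.1 < k ∧ pf (phiP m l S hSr hSc α β) p.1 < pf (phiP m l S hSr hSc α β) k))
      ∧ (p.1 < m + 1 ∧ m + 2 ≤ p.2))) := by
    rw [Finset.disjoint_left]
    intro p hp hq
    rw [mem_filter] at hp hq
    obtain ⟨_, ⟨_, _, _⟩, h⟩ := hp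
    obtain ⟨_, _, _, h'⟩ := hq
    omega
  have hD3 : Disjoint (((range (m+1+(l+1)+1)) ×ˢ (range (m+1+(l+1)+1))).filter (fun p =>
      (p.1 < p.2 ∧ pf (phiP m l S hSr hSc α β) p.2 < pf (phiP m l S hSr hSc α β) p.1 ∧
      ((0 < p.1 ∧ pf (phiP m l S hSr hSc α β) (p.1 - 1) < pf (phiP m l S hSr hSc α β) p.1) ∨
        ∃ k < p.2, p.1 < k ∧ pf (phiP m l S hSr hSc α β) p.1 < pf (phiP m l S hSr hSc α β) k))
      ∧ p.1 = m + 1)) (((range (m+1+(l+1)+1)) ×ˢ (range (m+1+(l+1)+1))).filter (fun p =>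
      (p.1 < p.2 ∧ pf (phiP m l S hSr hSc α β) p.2 < pf (phiP m l S hSr hSc α β) p.1 ∧
      ((0 < p.1 ∧ pf (phiP m l S hSr hSc α β) (p.1 - 1) < pf (phiP m l S hSr hSc α β) p.1) ∨
        ∃ k < p.2, p.1 < k ∧ pf (phiP m l S hSr hSc α β) p.1 < pf (phiP m l S hSr hSc α β) k))
      ∧ m + 2 ≤ p.1)) := by
    rw [Finset.disjoint_left]
    intro p hp hq
    rw [mem_filter] at hp hq
    obtain ⟨_, _, h⟩ := hp
    obtain ⟨_, _, h'⟩ := hq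
    omega
  have hD1 : Disjoint ((((range (m+1+(l+1)+1)) ×ˢ (range (m+1+(l+1)+1))).filter (fun p =>
      (p.1 < p.2 ∧ pf (phiP m l S hSr hSc α β) p.2 < pf (phiP m l S hSr hSc α β) p.1 ∧
      ((0 < p.1 ∧ pf (phiP m l S hSr hSc α β) (p.1 - 1) < pf (phiP m l S hSr hSc α β) p.1) ∨
        ∃ k < p.2, p.1 < k ∧ pf (phiP m l S hSr hSc α β) p.1 < pf (phiP m l S hSr hSc α β) k))
      ∧ p.2 < m + 1)) ∪ (((range (m+1+(l+1)+1)) ×ˢ (range (m+1+(l+1)+1))).filter (fun p =>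
      (p.1 < p.2 ∧ pf (phiP m l S hSr hSc α β) p.2 < pf (phiP m l S hSr hSc α β) p.1 ∧
      ((0 < p.1 ∧ pf (phiP m l S hSr hSc α β) (p.1 - 1) < pf (phiP m l S hSr hSc α β) p.1) ∨
        ∃ k < p.2, p.1 < k ∧ pf (phiP m l S hSr hSc α β) p.1 < pf (phiP m l S hSr hSc α β) k))
      ∧ (p.1 < m + 1 ∧ m + 2 ≤ p.2))))
      ((((range (m+1+(l+1)+1)) ×ˢ (range (m+1+(l+1)+1))).filter (fun p =>
      (p.1 < p.2 ∧ pf (phiP m l S hSr hSc α β) p.2 < pf (phiP m l S hSr hSc α β) p.1 ∧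
      ((0 < p.1 ∧ pf (phiP m l S hSr hSc α β) (p.1 - 1) < pf (phiP m l S hSr hSc α β) p.1) ∨
        ∃ k < p.2, p.1 < k ∧ pf (phiP m l S hSr hSc α β) p.1 < pf (phiP m l S hSr hSc α β) k))
      ∧ p.1 = m + 1)) ∪ (((range (m+1+(l+1)+1)) ×ˢ (range (m+1+(l+1)+1))).filter (fun p =>
      (p.1 < p.2 ∧ pf (phiP m l S hSr hSc α β) p.2 < pf (phiP m l S hSr hSc α β) p.1 ∧
      ((0 < p.1 ∧ pf (phiP m l S hSr hSc α β) (p.1 - 1) < pf (phiP m l S hSr hSc α β) p.1) ∨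
        ∃ k < p.2, p.1 < k ∧ pf (phiP m l S hSr hSc α β) p.1 < pf (phiP m l S hSr hSc α β) k))
      ∧ m + 2 ≤ p.1))) := by
    rw [Finset.disjoint_left]
    intro p hp hq
    rw [mem_union, mem_filter, mem_filter] at hp hq
    rcases hp with ⟨_, ⟨hlt, _, _⟩, h⟩ | ⟨_, ⟨hlt, _, _⟩, h⟩ <;>
      rcases hq with ⟨_, _, h'⟩ | ⟨_, _, h'⟩ <;> omega
  have hpart : ((range (m+1+(l+1)+1)) ×ˢ (range (m+1+(l+1)+1))).filter (fun p =>
      (p.1 < p.2 ∧ pf (phiP m l S hSr hSc α β) p.2 < pf (phiP m l S hSr hSc α β) p.1 ∧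
      ((0 < p.1 ∧ pf (phiP m l S hSr hSc α β) (p.1 - 1) < pf (phiP m l S hSr hSc α β) p.1) ∨
        ∃ k < p.2, p.1 < k ∧ pf (phiP m l S hSr hSc α β) p.1 < pf (phiP m l S hSr hSc α β) k))) =
      ((((range (m+1+(l+1)+1)) ×ˢ (range (m+1+(l+1)+1))).filter (fun p =>
      (p.1 < p.2 ∧ pf (phiP m l S hSr hSc α β) p.2 < pf (phiP m l S hSr hSc α β) p.1 ∧
      ((0 < p.1 ∧ pf (phiP m l S hSr hSc α β) (p.1 - 1) < pf (phiP m l S hSr hSc α β) p.1) ∨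
        ∃ k < p.2, p.1 < k ∧ pf (phiP m l S hSr hSc α β) p.1 < pf (phiP m l S hSr hSc α β) k))
      ∧ p.2 < m + 1)) ∪ (((range (m+1+(l+1)+1)) ×ˢ (range (m+1+(l+1)+1))).filter (fun p =>
      (p.1 < p.2 ∧ pf (phiP m l S hSr hSc α β) p.2 < pf (phiP m l S hSr hSc α β) p.1 ∧
      ((0 < p.1 ∧ pf (phiP m l S hSr hSc α β) (p.1 - 1) < pf (phiP m l S hSr hSc α β) p.1) ∨
        ∃ k < p.2, p.1 < k ∧ pf (phiP m l S hSr hSc α β) p.1 < pf (phiP m l S hSr hSc α β) k))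
      ∧ (p.1 < m + 1 ∧ m + 2 ≤ p.2))))
      ∪ ((((range (m+1+(l+1)+1)) ×ˢ (range (m+1+(l+1)+1))).filter (fun p =>
      (p.1 < p.2 ∧ pf (phiP m l S hSr hSc α β) p.2 < pf (phiP m l S hSr hSc α β) p.1 ∧
      ((0 < p.1 ∧ pf (phiP m l S hSr hSc α β) (p.1 - 1) < pf (phiP m l S hSr hSc α β) p.1) ∨
        ∃ k < p.2, p.1 < k ∧ pf (phiP m l S hSr hSc α β) p.1 < pf (phiP m l S hSr hSc α β) k))
      ∧ p.1 = m + 1)) ∪ (((range (m+1+(l+1)+1)) ×ˢ (range (m+1+(l+1)+1))).filter (fun p =>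
      (p.1 < p.2 ∧ pf (phiP m l S hSr hSc α β) p.2 < pf (phiP m l S hSr hSc α β) p.1 ∧
      ((0 < p.1 ∧ pf (phiP m l S hSr hSc α β) (p.1 - 1) < pf (phiP m l S hSr hSc α β) p.1) ∨
        ∃ k < p.2, p.1 < k ∧ pf (phiP m l S hSr hSc α β) p.1 < pf (phiP m l S hSr hSc α β) k))
      ∧ m + 2 ≤ p.1))) := by
    ext p
    simp only [mem_union, mem_filter, mem_product, mem_range]
    constructor
    · rintro ⟨⟨h1, h2⟩, hP⟩
      have hinv := hP.2.1
      rcases Nat.lt_or_ge p.2 (m + 1) with hc2 | hc2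
      · exact Or.inl (Or.inl ⟨⟨h1, h2⟩, hP, hc2⟩)
      · have hne : p.2 ≠ m + 1 := by
          intro he
          rw [he, hmid] at hinv
          have hp1h : p.1 < m + 1 := by omega
          have := pf_phi_head_lt m l S hSr hSc α β hp1h
          omega
        have hc2' : m + 2 ≤ p.2 := by omega
        rcases Nat.lt_or_ge p.1 (m + 1) with hc1 | hc1
        · exact Or.inl (Or.inr ⟨⟨h1, h2⟩, hP, hc1, hc2'⟩)
        · rcases Nat.eq_or_lt_of_le hc1 with hc1' | hc1'
          · exact Or.inr (Or.inl ⟨⟨h1, h2⟩, hP, hc1'.symm⟩)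
          · exact Or.inr (Or.inr ⟨⟨h1, h2⟩, hP, by omega⟩)
    · rintro ((⟨hm, hP, _⟩ | ⟨hm, hP, _⟩) | (⟨hm, hP, _⟩ | ⟨hm, hP, _⟩)) <;> exact ⟨hm, hP⟩
  show (((range (m+1+(l+1)+1)) ×ˢ (range (m+1+(l+1)+1))).filter (fun p =>
      (p.1 < p.2 ∧ pf (phiP m l S hSr hSc α β) p.2 < pf (phiP m l S hSr hSc α β) p.1 ∧
      ((0 < p.1 ∧ pf (phiP m l S hSr hSc α β) (p.1 - 1) < pf (phiP m l S hSr hSc α β) p.1) ∨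
        ∃ k < p.2, p.1 < k ∧ pf (phiP m l S hSr hSc α β) p.1 < pf (phiP m l S hSr hSc α β) k)))).card = _
  rw [hpart, card_union_of_disjoint hD1, card_union_of_disjoint hD2,
    card_union_of_disjoint hD3, ai_B1 m l S hSr hSc α β, ai_B3 m l S hSr hSc α β,
    ai_B4 m l S hSr hSc α β, ai_B5 m l S hSr hSc α β]
  omega

lemma emb_CC_eq_zero_iff {x : ℕ} (hx : x < (CC m l S).card) :
    emb (CC m l S) x = 0 ↔ x = 0 := by
  have h0 : emb (CC m l S) 0 = 0 := emb_zero_of_mem zero_mem_CC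
  constructor
  · intro h
    have hc : 0 < (CC m l S).card := by omega
    exact emb_inj hx hc (by rw [h, h0])
  · rintro rfl; exact h0

lemma pf_phi_zero_iff {i : ℕ} (hi : i < m + 1) :
    pf (phiP m l S hSr hSc α β) i = 0 ↔ pf α i = 0 := by
  rw [pf_phi_head m l S hSr hSc α β hi, pf_head_pf m α i hi]
  exact emb_CC_eq_zero_iff m l S (by rw [CC_card hSr hSc]; exact (α _).isLt)

lemma isPRW_phi_iff :
    isPRW (phiP m l S hSr hSc α β) ↔ isPRW α := by
  have hmid := pf_phi_mid m l S hSr hSc α β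
  constructor
  · intro h i hi hi1 hasc hfirst
    have hi' : i < m := by omega
    have := h i (by omega) (by omega)
      ((pf_phi_head_lt_iff m l S hSr hSc α β (by omega) (by omega)).mpr hasc)
      (fun j hj => by
        rw [pf_phi_head_lt_iff m l S hSr hSc α β (by omega) (by omega)]
        exact hfirst j hj)
    exact (pf_phi_zero_iff m l S hSr hSc α β (by omega)).mp this
  · intro hα i hi hi1 hasc hfirst
    rcases Nat.lt_or_ge i m with hc | hc
    · have := hα i (by omega) (by omega)
        ((pf_phi_head_lt_iff m l S hSr hSc α β (by omega) (by omega)).mp hasc)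
        (fun j hj => by
          have := hfirst j hj
          rwa [pf_phi_head_lt_iff m l S hSr hSc α β (by omega) (by omega)] at this)
      exact (pf_phi_zero_iff m l S hSr hSc α β (by omega)).mpr this
    · rcases Nat.eq_or_lt_of_le hc with hc' | hc'
      · -- i = m : head is strictly decreasing, so pf α m = 0
        have hdec : ∀ j, j < m → pf α (j + 1) ≤ pf α j := by
          intro j hj
          have := hfirst j (by omega)
          rw [pf_phi_head_lt_iff m l S hSr hSc α β (by omega) (by omega)] at this
          omega
        have hchain : ∀ d j, j + d = m → pf α m ≤ pf α j := by
          intro d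
          induction d with
          | zero => intro j hj; rw [show j = m by omega]
          | succ d ih =>
            intro j hj
            have h1 := ih (j + 1) (by omega)
            have h2 := hdec j (by omega)
            omega
        have hex : ∃ j, j ≤ m ∧ pf α j = 0 := by
          set j0 : Fin (m+1) := α.symm ⟨0, by omega⟩ with hj0
          refine ⟨(j0 : ℕ), by have := j0.isLt; omega, ?_⟩
          rw [pf_val α j0, hj0]
          simp
        obtain ⟨j, hj, hj0⟩ := hex
        have := hchain (m - j) j (by omega)
        have hzm : pf α m = 0 := by omega
        rw [← hc']
        exact (pf_phi_zero_iff m l S hSr hSc α β (by omega)).mpr hzm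
      · exfalso
        apply hfirst m (by omega)
        rw [hmid]
        exact pf_phi_head_lt m l S hSr hSc α β (by omega)

lemma TT_eq_tail_image :
    (range (l+1)).image (fun j => pf (phiP m l S hSr hSc α β) (m + 2 + j)) = TT S := by
  ext x
  simp only [mem_image, mem_range]
  constructor
  · rintro ⟨j, hj, rfl⟩
    exact pf_phi_tail_mem m l S hSr hSc α β (by omega) (by omega)
  · intro hx
    have hTcard : (TT S).card = l + 1 := by rw [TT_card, hSc]
    obtain ⟨i0, hi0, hemb0⟩ := emb_surj hx
    rw [hTcard] at hi0
    refine ⟨(β.symm ⟨i0, hi0⟩ : Fin (l+1)), (β.symm _).isLt, ?_⟩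
    rw [pf_phi_tail m l S hSr hSc α β (by omega) (by have := (β.symm ⟨i0, hi0⟩).isLt; omega)]
    simp only [Nat.add_sub_cancel_left, Fin.eta]
    rw [Equiv.apply_symm_apply]
    exact hemb0

lemma CC_eq_head_image :
    (range (m+1)).image (fun j => pf (phiP m l S hSr hSc α β) j) = CC m l S := by
  ext x
  simp only [mem_image, mem_range]
  constructor
  · rintro ⟨j, hj, rfl⟩
    exact pf_phi_head_mem m l S hSr hSc α β hj
  · intro hx
    have hCcard : (CC m l S).card = m + 1 := CC_card hSr hSc
    obtain ⟨i0, hi0, hemb0⟩ := emb_surj hx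
    rw [hCcard] at hi0
    refine ⟨(α.symm ⟨i0, hi0⟩ : Fin (m+1)), (α.symm _).isLt, ?_⟩
    rw [pf_phi_head m l S hSr hSc α β (α.symm ⟨i0, hi0⟩).isLt]
    simp only [Fin.eta]
    rw [Equiv.apply_symm_apply]
    exact hemb0

lemma S_eq_TT_image : (TT S).image (fun x => x - 1) = S := by
  ext a
  simp only [mem_image]
  constructor
  · rintro ⟨x, hx, rfl⟩
    obtain ⟨b, hb, rfl⟩ := mem_TT.mp hx
    simpa using hb
  · intro ha
    exact ⟨a + 1, mem_TT.mpr ⟨a, ha, rfl⟩, by omega⟩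

lemma phi_inj {S S' : Finset ℕ} {hSr : S ⊆ range (m + l + 1)} {hSc : S.card = l + 1}
    {hSr' : S' ⊆ range (m + l + 1)} {hSc' : S'.card = l + 1}
    {α α' : Equiv.Perm (Fin (m + 1))} {β β' : Equiv.Perm (Fin (l + 1))}
    (h : phiP m l S hSr hSc α β = phiP m l S' hSr' hSc' α' β') :
    S = S' ∧ β = β' ∧ α = α' := by
  have hpf : ∀ x, pf (phiP m l S hSr hSc α β) x = pf (phiP m l S' hSr' hSc' α' β') x :=
    fun x => by rw [h]
  have hTT : TT S = TT S' := by
    rw [← TT_eq_tail_image m l S hSr hSc α β, ← TT_eq_tail_image m l S' hSr' hSc' α' β']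
    apply image_congr
    intro j _
    exact hpf _
  have hSS : S = S' := by
    rw [← S_eq_TT_image (S := S), ← S_eq_TT_image (S := S'), hTT]
  subst hSS
  have hTcard : (TT S).card = l + 1 := by rw [TT_card, hSc]
  have hCcard : (CC m l S).card = m + 1 := CC_card hSr hSc
  refine ⟨rfl, ?_, ?_⟩
  · apply Equiv.ext
    intro j
    have hj := j.isLt
    have h1 := hpf (m + 2 + (j : ℕ))
    rw [pf_phi_tail m l S hSr hSc α β (by omega) (by omega),
      pf_phi_tail m l S hSr' hSc' α' β' (by omega) (by omega)] at h1
    simp only [Nat.add_sub_cancel_left, Fin.eta] at h1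
    exact Fin.ext (emb_inj (by rw [hTcard]; exact (β j).isLt)
      (by rw [hTcard]; exact (β' j).isLt) h1)
  · apply Equiv.ext
    intro j
    have hj := j.isLt
    have h1 := hpf (j : ℕ)
    rw [pf_phi_head m l S hSr hSc α β (by omega),
      pf_phi_head m l S hSr' hSc' α' β' (by omega)] at h1
    simp only [Fin.eta] at h1
    exact Fin.ext (emb_inj (by rw [hCcard]; exact (α j).isLt)
      (by rw [hCcard]; exact (α' j).isLt) h1)

lemma phi_surj (π : Equiv.Perm (Fin (m + 1 + (l + 1) + 1))) (hprw : isPRW π)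
    (hmax : pf π (m + 1) = m + l + 2) :
    ∃ (S : Finset ℕ) (hSr : S ⊆ range (m + l + 1)) (hSc : S.card = l + 1)
      (α : Equiv.Perm (Fin (m + 1))) (β : Equiv.Perm (Fin (l + 1))),
      phiP m l S hSr hSc α β = π := by
  have hlt : ∀ x, x < m+1+(l+1)+1 → pf π x < m+1+(l+1)+1 := by
    intro x hx
    unfold pf
    rw [dif_pos hx]
    exact (π _).isLt
  have hne : ∀ x, x < m+1+(l+1)+1 → x ≠ m + 1 → pf π x ≠ m + l + 2 := by
    intro x hx hxne he
    exact hxne (pf_inj π (x := x) (y := m + 1) hx (by omega) (by rw [he, hmax]))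
  have hbnd : ∀ x, x < m+1+(l+1)+1 → x ≠ m + 1 → pf π x ≤ m + l + 1 := by
    intro x hx hxne
    have := hlt x hx
    have := hne x hx hxne
    omega
  -- the letter 0 sits in the head
  have hasc_m : pf π m < pf π (m + 1) := by
    have := hbnd m (by omega) (by omega)
    omega
  have hex : ∃ i, pf π i < pf π (i + 1) := ⟨m, hasc_m⟩
  have hi0m : Nat.find hex ≤ m := Nat.find_min' hex hasc_m
  have hzero : pf π (Nat.find hex) = 0 :=
    hprw (Nat.find hex) (by omega) (by omega) (Nat.find_spec hex)
      (fun j hj => Nat.find_min hex hj)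
  have htail_pos : ∀ x, m + 2 ≤ x → x < m+1+(l+1)+1 → 1 ≤ pf π x := by
    intro x h1 h2
    by_contra hc
    have h0 : pf π x = 0 := by omega
    have := pf_inj π (x := x) (y := Nat.find hex) h2 (by omega) (by rw [h0, hzero])
    omega
  -- define S
  set Tv := (range (l+1)).image (fun j => pf π (m + 2 + j)) with hTv
  set S := Tv.image (fun x => x - 1) with hSdef
  have hTvmem : ∀ x ∈ Tv, 1 ≤ x ∧ x ≤ m + l + 1 := by
    intro x hx
    rw [hTv, mem_image] at hx
    obtain ⟨j, hj, rfl⟩ := hx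
    rw [mem_range] at hj
    exact ⟨htail_pos _ (by omega) (by omega), hbnd _ (by omega) (by omega)⟩
  have hSr : S ⊆ range (m + l + 1) := by
    intro x hx
    rw [hSdef, mem_image] at hx
    obtain ⟨v, hv, rfl⟩ := hx
    have := hTvmem v hv
    rw [mem_range]
    omega
  have hTvcard : Tv.card = l + 1 := by
    rw [hTv, card_image_of_injOn, card_range]
    intro a ha b hb hab
    rw [mem_coe, mem_range] at ha hb
    have := pf_inj π (x := m+2+a) (y := m+2+b) (by omega) (by omega) hab
    omega
  have hSc : S.card = l + 1 := by
    rw [hSdef, card_image_of_injOn, hTvcard]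
    intro a ha b hb hab
    rw [mem_coe] at ha hb
    have h1 := hTvmem a ha
    have h2 := hTvmem b hb
    simp only at hab
    omega
  have hTT : TT S = Tv := by
    ext x
    rw [mem_TT]
    constructor
    · rintro ⟨a, ha, rfl⟩
      rw [hSdef, mem_image] at ha
      obtain ⟨v, hv, rfl⟩ := ha
      have := hTvmem v hv
      rw [show v - 1 + 1 = v by omega]
      exact hv
    · intro hx
      refine ⟨x - 1, ?_, by have := hTvmem x hx; omega⟩
      rw [hSdef, mem_image]
      exact ⟨x, hx, rfl⟩
  have hCC : CC m l S = (range (m+1)).image (fun j => pf π j) := by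
    have hsub : (range (m+1)).image (fun j => pf π j) ⊆ CC m l S := by
      intro x hx
      rw [mem_image] at hx
      obtain ⟨j, hj, rfl⟩ := hx
      rw [mem_range] at hj
      unfold CC
      rw [mem_sdiff, mem_range, hTT]
      constructor
      · have := hlt j (by omega)
        have := hne j (by omega) (by omega)
        omega
      · intro hmem
        rw [hTv, mem_image] at hmem
        obtain ⟨j', hj', he⟩ := hmem
        rw [mem_range] at hj'
        have := pf_inj π (x := m+2+j') (y := j) (by omega) (by omega) he
        omega
    have hcard : ((range (m+1)).image (fun j => pf π j)).card = m + 1 := by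
      rw [card_image_of_injOn, card_range]
      intro a ha b hb hab
      rw [mem_coe, mem_range] at ha hb
      exact pf_inj π (by omega) (by omega) hab
    exact (Finset.eq_of_subset_of_card_le hsub
      (by rw [hcard, CC_card hSr hSc])).symm
  have hCcard : (CC m l S).card = m + 1 := CC_card hSr hSc
  have hTcard : (TT S).card = l + 1 := by rw [TT_card, hSc]
  -- build α
  have hchooseA : ∀ i : Fin (m+1), ∃ a, a < (CC m l S).card ∧ emb (CC m l S) a = pf π (i : ℕ) := by
    intro i
    have : pf π (i : ℕ) ∈ CC m l S := by
      rw [hCC, mem_image]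
      exact ⟨(i : ℕ), mem_range.mpr i.isLt, rfl⟩
    obtain ⟨a, ha1, ha2⟩ := emb_surj this
    exact ⟨a, ha1, ha2⟩
  have hchooseB : ∀ j : Fin (l+1), ∃ a, a < (TT S).card ∧ emb (TT S) a = pf π (m + 2 + (j : ℕ)) := by
    intro j
    have : pf π (m + 2 + (j : ℕ)) ∈ TT S := by
      rw [hTT, hTv, mem_image]
      exact ⟨(j : ℕ), mem_range.mpr j.isLt, rfl⟩
    obtain ⟨a, ha1, ha2⟩ := emb_surj this
    exact ⟨a, ha1, ha2⟩
  set fA : Fin (m+1) → Fin (m+1) := fun i =>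
    ⟨Classical.choose (hchooseA i), by
      have := (Classical.choose_spec (hchooseA i)).1
      exact lt_of_lt_of_le this (le_of_eq hCcard)⟩ with hfA
  set fB : Fin (l+1) → Fin (l+1) := fun j =>
    ⟨Classical.choose (hchooseB j), by
      have := (Classical.choose_spec (hchooseB j)).1
      exact lt_of_lt_of_le this (le_of_eq hTcard)⟩ with hfB
  have hfAspec : ∀ i : Fin (m+1), emb (CC m l S) ((fA i : Fin (m+1)) : ℕ) = pf π (i : ℕ) :=
    fun i => (Classical.choose_spec (hchooseA i)).2
  have hfBspec : ∀ j : Fin (l+1), emb (TT S) ((fB j : Fin (l+1)) : ℕ) = pf π (m + 2 + (j : ℕ)) :=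
    fun j => (Classical.choose_spec (hchooseB j)).2
  have hfAinj : Function.Injective fA := by
    intro i j hij
    have h1 := hfAspec i
    have h2 := hfAspec j
    rw [hij] at h1
    have := pf_inj π (x := (i : ℕ)) (y := (j : ℕ)) (by have := i.isLt; omega)
      (by have := j.isLt; omega) (by rw [← h1, ← h2])
    exact Fin.ext this
  have hfBinj : Function.Injective fB := by
    intro i j hij
    have h1 := hfBspec i
    have h2 := hfBspec j
    rw [hij] at h1
    have := pf_inj π (x := m + 2 + (i : ℕ)) (y := m + 2 + (j : ℕ))
      (by have := i.isLt; omega) (by have := j.isLt; omega) (by rw [← h1, ← h2])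
    exact Fin.ext (by omega)
  set α : Equiv.Perm (Fin (m+1)) := Equiv.ofBijective fA
    (Finite.injective_iff_bijective.mp hfAinj) with hα
  set β : Equiv.Perm (Fin (l+1)) := Equiv.ofBijective fB
    (Finite.injective_iff_bijective.mp hfBinj) with hβ
  refine ⟨S, hSr, hSc, α, β, ?_⟩
  apply Equiv.ext
  intro x
  apply Fin.ext
  have hx := x.isLt
  have e1 : ((phiP m l S hSr hSc α β x : Fin _) : ℕ) = pf (phiP m l S hSr hSc α β) (x : ℕ) :=
    (pf_val _ x).symm
  have e2 : ((π x : Fin _) : ℕ) = pf π (x : ℕ) := (pf_val _ x).symm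
  rw [e1, e2]
  rcases Nat.lt_or_ge (x : ℕ) (m + 1) with hc | hc
  · rw [pf_phi_head m l S hSr hSc α β hc]
    have : α ⟨(x : ℕ), hc⟩ = fA ⟨(x : ℕ), hc⟩ := rfl
    rw [this, hfAspec ⟨(x : ℕ), hc⟩]
  · rcases Nat.eq_or_lt_of_le hc with hc' | hc'
    · rw [show (x : ℕ) = m + 1 from hc'.symm, pf_phi_mid m l S hSr hSc α β, hmax]
    · have hxb : (x : ℕ) - (m + 2) < l + 1 := by omega
      have hxe : m + 2 + ((x : ℕ) - (m + 2)) = (x : ℕ) := by omega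
      rw [pf_phi_tail m l S hSr hSc α β (by omega) (by omega)]
      exact (hfBspec ⟨(x : ℕ) - (m + 2), hxb⟩).trans (congrArg (pf π) hxe)

end AiBlocks

theorem aux_stmt17 {R : Type*} [CommRing R] (t q : R) (m l : ℕ) :
    ∑ π ∈ Finset.univ.filter
        (fun π : Equiv.Perm (Fin (m + 1 + (l + 1) + 1)) =>
          isPRW π ∧ pf π (m + 1) = m + 1 + (l + 1)),
        t ^ desN π * q ^ aiN π =
      t * gaussR q (m + l + 1) (l + 1) * q ^ (l + 1) *
        (∑ σ : Equiv.Perm (Fin (l + 1)), t ^ desN σ * q ^ aiN σ) *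
        (∑ π ∈ Finset.univ.filter (fun π : Equiv.Perm (Fin (m + 1)) => isPRW π),
          t ^ desN π * q ^ aiN π) := by
  classical
  set Idx := (Finset.univ.filter (fun π : Equiv.Perm (Fin (m+1)) => isPRW π)) ×ˢ
    ((Finset.univ : Finset (Equiv.Perm (Fin (l+1)))) ×ˢ
     (powersetCard (l+1) (range (m+l+1)))) with hIdx
  have hRHS : t * gaussR q (m + l + 1) (l + 1) * q ^ (l + 1) *
        (∑ σ : Equiv.Perm (Fin (l + 1)), t ^ desN σ * q ^ aiN σ) *
        (∑ π ∈ Finset.univ.filter (fun π : Equiv.Perm (Fin (m + 1)) => isPRW π),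
          t ^ desN π * q ^ aiN π) =
      ∑ x ∈ Idx, t ^ (desN x.1 + desN x.2.1 + 1) *
        q ^ (aiN x.1 + aiN x.2.1 + (l + 1) + vS (m + l + 1) x.2.2) := by
    rw [hIdx, gauss_eq]
    simp only [Finset.sum_product, Finset.mul_sum, Finset.sum_mul]
    refine sum_congr rfl fun a ha => ?_
    refine sum_congr rfl fun σ hσ => ?_
    refine sum_congr rfl fun S hS => ?_
    simp only [pow_add, pow_one]
    ring
  rw [hRHS]
  refine (Finset.sum_bij
    (fun x hx => phiP m l x.2.2 (mem_powersetCard.mp (mem_product.mp (mem_product.mp hx).2).2).1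
      (mem_powersetCard.mp (mem_product.mp (mem_product.mp hx).2).2).2 x.1 x.2.1)
    ?_ ?_ ?_ ?_).symm
  · intro x hx
    rw [mem_filter]
    refine ⟨mem_univ _, ?_, ?_⟩
    · rw [isPRW_phi_iff]
      have := (mem_product.mp hx).1
      rw [mem_filter] at this
      exact this.2
    · rw [pf_phi_mid]
      omega
  · intro x hx y hy heq
    obtain ⟨hSS, hbb, haa⟩ := phi_inj m l heq
    have h2 : x.2 = y.2 := Prod.ext hbb hSS
    exact Prod.ext haa h2
  · intro π hπ
    rw [mem_filter] at hπ
    obtain ⟨-, hprw, hmax⟩ := hπ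
    obtain ⟨S, hSr, hSc, α, β, hphi⟩ := phi_surj m l π hprw (by rw [hmax]; omega)
    refine ⟨(α, (β, S)), ?_, hphi⟩
    rw [mem_product, mem_product, mem_powersetCard]
    refine ⟨?_, mem_univ _, hSr, hSc⟩
    rw [mem_filter]
    refine ⟨mem_univ _, ?_⟩
    rw [← isPRW_phi_iff m l S hSr hSc α β, hphi]
    exact hprw
  · intro x hx
    rw [desN_phi, aiN_phi]

/-- the refined (des, ai)-generating polynomial over permutations in
`PRW_{n+1}` whose entry at position n+1-k is the letter n+1 (0-based: position n-k
carries value n) factors as `t [n-1 choose k]_q q^k A_k(t,q) B̃_{n-1-k}(t,q)`. -/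
theorem stmt17 {R : Type*} [CommRing R] (t q : R) (n k : ℕ) (hk : 1 ≤ k) (hkn : k ≤ n - 1) :
    ∑ π ∈ Finset.univ.filter
        (fun π : Equiv.Perm (Fin (n + 1)) => isPRW π ∧ pf π (n - k) = n),
        t ^ desN π * q ^ aiN π =
      t * gaussR q (n - 1) k * q ^ k *
        (∑ σ : Equiv.Perm (Fin k), t ^ desN σ * q ^ aiN σ) *
        (∑ π ∈ Finset.univ.filter (fun π : Equiv.Perm (Fin (n - k)) => isPRW π),
          t ^ desN π * q ^ aiN π) := by
  obtain ⟨l, rfl⟩ : ∃ l, k = l + 1 := ⟨k - 1, by omega⟩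
  obtain ⟨m, rfl⟩ : ∃ m, n = m + 1 + (l + 1) := ⟨n - (l + 2), by omega⟩
  have e1 : m + 1 + (l + 1) - (l + 1) = m + 1 := by omega
  have e2 : m + 1 + (l + 1) - 1 = m + l + 1 := by omega
  rw [e2, e1]
  exact aux_stmt17 t q m l
end
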